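/- arXiv:1512.02458 — 5 statements merged into one kernel-verified Lean document; each statement's English description precedes it below -/
import Mathlib

section
/- Let F be a foliage tree with a least node and height at most ω (every node has finitely many strict predecessors). Then F is locally strict if and only if F is splittable and flesh(F) = yield(F), i.e. the union of all leaves equals the union over all branches B of ⋂_{x∈B} F_x. -/
universe u u' v

/-- A set-theoretic tree: a strict partial order on a set of nodes in which
the set of strict predecessors of every node is linearly ordered and
well-founded (i.e. well-ordered). -/
structure STree (α : Type u) where
  nodes : Set α
  lt : α → α → Prop
  lt_mem_left : ∀ {x y}, lt x y → x ∈ nodes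
  lt_mem_right : ∀ {x y}, lt x y → y ∈ nodes
  lt_irrefl : ∀ x, ¬ lt x x
  lt_trans : ∀ {x y z}, lt x y → lt y z → lt x z
  pred_linear : ∀ {x v w}, lt v x → lt w x → lt v w ∨ v = w ∨ lt w v
  pred_wf : ∀ {x : α} (A : Set α), (∀ a ∈ A, lt a x) → A.Nonempty →
      ∃ m ∈ A, ∀ a ∈ A, ¬ lt a m

namespace STree

variable {α : Type u} {α' : Type u'} {β : Type v}

/-- The associated (non-strict) order, restricted to nodes. -/
def le (T : STree α) (x y : α) : Prop := T.lt x y ∨ (x = y ∧ x ∈ T.nodes)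

def IsChain (T : STree α) (C : Set α) : Prop :=
  C ⊆ T.nodes ∧ ∀ x ∈ C, ∀ y ∈ C, T.le x y ∨ T.le y x

/-- A branch is a ⊆-maximal chain. -/
def IsBranch (T : STree α) (B : Set α) : Prop :=
  T.IsChain B ∧ ∀ C, T.IsChain C → B ⊆ C → B = C

/-- Two nodes are incomparable. -/
def Incomp (T : STree α) (x y : α) : Prop :=
  x ∈ T.nodes ∧ y ∈ T.nodes ∧ ¬ T.le x y ∧ ¬ T.le y x

/-- `s` is a son (immediate successor) of `x`. -/
def IsSon (T : STree α) (x s : α) : Prop :=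
  T.lt x s ∧ ¬ ∃ v, T.lt x v ∧ T.lt v s

def sons (T : STree α) (x : α) : Set α := {s | T.IsSon x s}

def IsMax (T : STree α) (m : α) : Prop := m ∈ T.nodes ∧ ∀ v, ¬ T.lt m v

def maxNodes (T : STree α) : Set α := {m | T.IsMax m}

def minNodes (T : STree α) : Set α := {m | m ∈ T.nodes ∧ ∀ v, ¬ T.lt v m}

/-- `r` is the least node of `T`. -/
def IsRoot (T : STree α) (r : α) : Prop := r ∈ T.nodes ∧ ∀ x ∈ T.nodes, T.le r x

def roots (T : STree α) : Set α := {r | T.IsRoot r}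

/-- The strict predecessors of a node. -/
def pred (T : STree α) (x : α) : Set α := {v | T.lt v x}

/-- `{v : v ≤ m}`. -/
def below (T : STree α) (m : α) : Set α := {v | T.le v m}

/-- `{v : v ≥ m}`. -/
def above (T : STree α) (m : α) : Set α := {v | T.le m v}

/-- Every nonempty chain has an upper bound among the nodes. -/
def BoundedChains (T : STree α) : Prop :=
  ∀ C, T.IsChain C → C.Nonempty → ∃ z ∈ T.nodes, ∀ c ∈ C, T.le c z

/-- Height at most ω: each node has only finitely many strict predecessors. -/
def HeightLeOmega (T : STree α) : Prop := ∀ x ∈ T.nodes, (T.pred x).Finite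

/-- No maximal nodes. -/
def NoMax (T : STree α) : Prop := ∀ m ∈ T.nodes, ∃ v, T.lt m v

/-- Every non-maximal node has exactly ℵ₀ sons. -/
def Aleph0Branching (T : STree α) : Prop :=
  ∀ x ∈ T.nodes, ¬ T.IsMax x → (T.sons x).Countable ∧ (T.sons x).Infinite

/-- Every non-maximal node has exactly κ sons. -/
def Branching (T : STree α) (κ : Cardinal.{u}) : Prop :=
  ∀ x ∈ T.nodes, ¬ T.IsMax x → Cardinal.mk (T.sons x) = κ

/-- The strict order (proper initial segment) on finite sequences of naturals. -/
def listLt (x y : List ℕ) : Prop := x <+: y ∧ x ≠ y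

/-- `T` is order-isomorphic to the tree `(ℕ^{<ω}, ⊂)` of all finite sequences of
naturals ordered by proper extension. -/
def IsoToSeqTree (T : STree α) : Prop :=
  ∃ f : α → List ℕ, Set.BijOn f T.nodes Set.univ ∧
    ∀ x ∈ T.nodes, ∀ y ∈ T.nodes, (T.lt x y ↔ listLt (f x) (f y))

/-! ### Foliage trees: a tree together with a leaf (a set) at each node. -/

/-- Larger nodes have smaller leaves. -/
def Nonincreasing (T : STree α) (leaf : α → Set β) : Prop :=
  ∀ {x y}, T.le x y → leaf y ⊆ leaf x

/-- Incomparable nodes have disjoint leaves. -/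
def Splittable (T : STree α) (leaf : α → Set β) : Prop :=
  ∀ {x y}, T.Incomp x y → leaf x ∩ leaf y = ∅

/-- The leaf of each non-maximal node is the disjoint union of the leaves of its sons. -/
def LocallyStrict (T : STree α) (leaf : α → Set β) : Prop :=
  ∀ x ∈ T.nodes, ¬ T.IsMax x →
    (leaf x = ⋃ s ∈ T.sons x, leaf s) ∧
    (∀ s ∈ T.sons x, ∀ s' ∈ T.sons x, s ≠ s' → leaf s ∩ leaf s' = ∅)

/-- The union of all leaves. -/
def flesh (T : STree α) (leaf : α → Set β) : Set β := ⋃ x ∈ T.nodes, leaf x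

/-- The intersection of leaves over a set of nodes. -/
def fruit (leaf : α → Set β) (A : Set α) : Set β := ⋂ x ∈ A, leaf x

/-- The union, over all branches, of the intersections of leaves along a branch. -/
def yield (T : STree α) (leaf : α → Set β) : Set β :=
  ⋃ B ∈ {B | T.IsBranch B}, fruit leaf B

/-- The intersection of leaves along any branch is a singleton. -/
def StrictBranches (T : STree α) (leaf : α → Set β) : Prop :=
  T.nodes.Nonempty ∧ ∀ B, T.IsBranch B → ∃ q, fruit leaf B = {q}

/-- All leaves are open. -/
def OpenLeaves (T : STree α) [TopologicalSpace β] (leaf : α → Set β) : Prop :=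
  ∀ x ∈ T.nodes, IsOpen (leaf x)

/-- The nodes whose leaf contains `p`. -/
def scope (T : STree α) (leaf : α → Set β) (p : β) : Set α :=
  {y | y ∈ T.nodes ∧ p ∈ leaf y}

/-- The family of unions of leaves over cofinite subsets of the sons of `z`. -/
def shoot (T : STree α) (leaf : α → Set β) (z : α) : Set (Set β) :=
  {U | ∃ C ⊆ T.sons z, (T.sons z \ C).Finite ∧ U = ⋃ s ∈ C, leaf s}

/-- `γ` π-refines `δ`: every nonempty member of `δ` contains a nonempty member of `γ`. -/
def PiRefines (γ δ : Set (Set β)) : Prop :=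
  ∀ D ∈ δ, D ≠ ∅ → ∃ G ∈ γ, G ≠ ∅ ∧ G ⊆ D

/-- The foliage tree grows into the subspace `Y`: for every `p ∈ Y` and every
neighbourhood `U` of `p` in the subspace `Y`, some `z ∈ scope(p)` has
`shoot(z)` π-refining `{U}`. -/
def GrowsInto (T : STree α) (leaf : α → Set β) [TopologicalSpace β] (Y : Set β) : Prop :=
  ∀ p ∈ Y, ∀ U : Set β, U ⊆ Y → U ∈ nhdsWithin p Y →
    ∃ z ∈ T.scope leaf p, PiRefines (T.shoot leaf z) {U}

/-- `H` shoots into `F`. -/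
def ShootsInto (H : STree α) (leafH : α → Set β) (F : STree α') (leafF : α' → Set β) : Prop :=
  ∀ p ∈ flesh H leafH, ∀ y ∈ F.scope leafF p,
    ∃ x ∈ H.scope leafH p, PiRefines (H.shoot leafH x) (F.shoot leafF y)

/-! ### Grafts and hybrids. -/

/-- The implant of a graft: its nodes other than the root and the maximal nodes. -/
def implant (G : STree α) : Set α := G.nodes \ (G.roots ∪ G.maxNodes)

/-- `G` is a graft for the tree `T`. -/
def IsGraft (T G : STree α) : Prop :=
  (∃ x ∈ G.nodes, ∃ y ∈ G.nodes, x ≠ y) ∧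
  (∃ r, G.IsRoot r) ∧
  G.roots ⊆ T.nodes ∧
  G.maxNodes ⊆ T.nodes ∧
  (∀ r ∈ G.roots, ∀ m ∈ G.maxNodes, T.lt r m) ∧
  (∀ m ∈ G.maxNodes, ∀ m' ∈ G.maxNodes, m ≠ m' → T.Incomp m m') ∧
  implant G ∩ T.nodes = ∅

/-- The explant of `T` and `G`: the strict `T`-successors of the root of `G`
not lying above any maximal node of `G`. -/
def explant (T G : STree α) : Set α :=
  {v | ∃ r ∈ G.roots, T.lt r v} \ ⋃ m ∈ G.maxNodes, T.above m

/-- A consistent family of grafts for `T`. -/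
def ConsistentGrafts (T : STree α) (γ : Set (STree α)) : Prop :=
  (∀ G ∈ γ, IsGraft T G) ∧
  (∀ D ∈ γ, ∀ E ∈ γ, D ≠ E → implant D ∩ implant E = ∅) ∧
  (∀ D ∈ γ, ∀ E ∈ γ, D ≠ E → ∀ rD ∈ D.roots, ∀ rE ∈ E.roots,
      T.Incomp rD rE ∨ (∃ m ∈ E.maxNodes, T.le m rD) ∨ (∃ m ∈ D.maxNodes, T.le m rE))

/-- The support of `T` for `γ`. -/
def supp (T : STree α) (γ : Set (STree α)) : Set α :=
  T.nodes \ ⋃ G ∈ γ, explant T G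

/-- The node set of the hybrid of `T` and `γ`. -/
def hybridNodes (T : STree α) (γ : Set (STree α)) : Set α :=
  supp T γ ∪ ⋃ G ∈ γ, implant G

/-- The union of `<_T` and the `<_G` (`G ∈ γ`), restricted to the hybrid nodes. -/
def hybridBase (T : STree α) (γ : Set (STree α)) (x y : α) : Prop :=
  x ∈ hybridNodes T γ ∧ y ∈ hybridNodes T γ ∧ (T.lt x y ∨ ∃ G ∈ γ, G.lt x y)

/-- The hybrid order: the transitive closure of `hybridBase`. -/
def hybridLt (T : STree α) (γ : Set (STree α)) (x y : α) : Prop :=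
  Relation.TransGen (hybridBase T γ) x y

/-! ### Foliage grafts and the foliage hybrid. -/

/-- `(G, leafG)` is a foliage graft for the nonincreasing foliage tree `(T, leafF)`. -/
def IsFGraft (T : STree α) (leafF : α → Set β) (G : STree α) (leafG : α → Set β) : Prop :=
  Nonincreasing G leafG ∧ IsGraft T G ∧
  (∀ r ∈ G.roots, leafG r ⊆ leafF r) ∧
  (∀ m ∈ G.maxNodes, leafG m = leafF m)

/-- The cut from `(T, leafF)` by the foliage graft `(G, leafG)`. -/
def cut (leafF : α → Set β) (G : STree α) (leafG : α → Set β) : Set β :=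
  ⋃ r ∈ G.roots, leafF r \ leafG r

/-- A consistent family of foliage grafts for `(T, leafF)`. -/
def ConsistentFGrafts (T : STree α) (leafF : α → Set β)
    (φ : Set (STree α × (α → Set β))) : Prop :=
  (∀ p ∈ φ, IsFGraft T leafF p.1 p.2) ∧
  (∀ p ∈ φ, ∀ q ∈ φ, p ≠ q → p.1 ≠ q.1) ∧
  ConsistentGrafts T (Prod.fst '' φ)

/-- The loss of `(T, leafF)` on `φ`. -/
def loss (leafF : α → Set β) (φ : Set (STree α × (α → Set β))) : Set β :=
  ⋃ p ∈ φ, cut leafF p.1 p.2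

/-! ### The Baire space and the standard foliage tree. -/

/-- The basic clopen set of the Baire space determined by a finite sequence. -/
def Scyl (x : List ℕ) : Set (ℕ → ℕ) := {p | ∀ i : Fin x.length, p i.1 = x.get i}

/-- A π-dense subset of the Baire space. -/
def PiDense (A : Set (ℕ → ℕ)) : Prop :=
  ∀ y : List ℕ, {n : ℕ | Scyl (y ++ [n]) ⊆ A}.Infinite

end STree

section Aux

variable {α : Type u} {β : Type v}

open STree

private theorem exists_rel_max' {r : α → α → Prop} (htr : ∀ {a b c}, r a b → r b c → r a c)
    (hirr : ∀ a, ¬ r a a) :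
    ∀ (n : ℕ) (S : Set α), S.Finite → S.ncard = n → S.Nonempty →
      ∃ m ∈ S, ∀ a ∈ S, ¬ r m a := by
  intro n
  induction n using Nat.strong_induction_on with
  | _ n IH =>
    intro S hfin hcard hne
    obtain ⟨a, ha⟩ := hne
    by_cases h : ∃ b ∈ S, r a b
    · obtain ⟨b, hb, hab⟩ := h
      have hsub : {b | b ∈ S ∧ r a b} ⊆ S := fun x hx => hx.1
      have hfin' : {b | b ∈ S ∧ r a b}.Finite := hfin.subset hsub
      have hss : {b | b ∈ S ∧ r a b} ⊂ S :=
        ⟨hsub, fun hSS => hirr a (hSS ha).2⟩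
      have hlt : {b | b ∈ S ∧ r a b}.ncard < n := hcard ▸ Set.ncard_lt_ncard hss hfin
      obtain ⟨m, hm, hmax⟩ := IH _ hlt _ hfin' rfl ⟨b, hb, hab⟩
      exact ⟨m, hm.1, fun c hc hmc => hmax c ⟨hc, htr hm.2 hmc⟩ hmc⟩
    · exact ⟨a, ha, fun b hb hab => h ⟨b, hb, hab⟩⟩

private theorem exists_rel_max {r : α → α → Prop} (htr : ∀ {a b c}, r a b → r b c → r a c)
    (hirr : ∀ a, ¬ r a a) {S : Set α} (hfin : S.Finite) (hne : S.Nonempty) :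
    ∃ m ∈ S, ∀ a ∈ S, ¬ r m a :=
  exists_rel_max' (r := r) htr hirr S.ncard S hfin rfl hne

private theorem exists_lt_max (T : STree α) {S : Set α} (hfin : S.Finite) (hne : S.Nonempty) :
    ∃ m ∈ S, ∀ a ∈ S, ¬ T.lt m a :=
  exists_rel_max (r := T.lt) (fun hab hbc => T.lt_trans hab hbc) T.lt_irrefl hfin hne

private theorem exists_lt_min (T : STree α) {S : Set α} (hfin : S.Finite) (hne : S.Nonempty) :
    ∃ m ∈ S, ∀ a ∈ S, ¬ T.lt a m :=
  exists_rel_max (r := fun a b => T.lt b a) (fun hab hbc => T.lt_trans hbc hab)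
    T.lt_irrefl hfin hne

private theorem tleRefl (T : STree α) {x : α} (hx : x ∈ T.nodes) : T.le x x :=
  Or.inr ⟨rfl, hx⟩

private theorem tleTrans (T : STree α) {x y z : α} (h1 : T.le x y) (h2 : T.le y z) :
    T.le x z := by
  rcases h1 with h1 | ⟨rfl, h1⟩
  · rcases h2 with h2 | ⟨rfl, h2⟩
    · exact Or.inl (T.lt_trans h1 h2)
    · exact Or.inl h1
  · exact h2

private theorem tltOfLeOfLt (T : STree α) {x y z : α} (h1 : T.le x y) (h2 : T.lt y z) :
    T.lt x z := by
  rcases h1 with h1 | ⟨rfl, h1⟩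
  · exact T.lt_trans h1 h2
  · exact h2

private theorem tltOfLtOfLe (T : STree α) {x y z : α} (h1 : T.lt x y) (h2 : T.le y z) :
    T.lt x z := by
  rcases h2 with h2 | ⟨rfl, h2⟩
  · exact T.lt_trans h1 h2
  · exact h1

private theorem chain_insert (T : STree α) {B : Set α} {z : α} (hB : T.IsChain B)
    (hz : z ∈ T.nodes) (hcomp : ∀ b ∈ B, T.le z b ∨ T.le b z) :
    T.IsChain (insert z B) := by
  constructor
  · intro a ha
    rcases Set.mem_insert_iff.mp ha with h | h
    · rw [h]; exact hz
    · exact hB.1 h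
  · intro a ha b hb
    rcases Set.mem_insert_iff.mp ha with h1 | h1
    · rcases Set.mem_insert_iff.mp hb with h2 | h2
      · rw [h1, h2]; exact Or.inl (tleRefl T hz)
      · rw [h1]; exact hcomp b h2
    · rcases Set.mem_insert_iff.mp hb with h2 | h2
      · rw [h2]; exact (hcomp a h1).symm
      · exact hB.2 a h1 b h2

/-- A node comparable with every element of a branch belongs to the branch. -/
private theorem mem_branch (T : STree α) {B : Set α} {z : α} (hB : T.IsBranch B)
    (hz : z ∈ T.nodes) (hcomp : ∀ b ∈ B, T.le z b ∨ T.le b z) : z ∈ B := by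
  have hchain : T.IsChain (insert z B) := chain_insert T hB.1 hz hcomp
  have := hB.2 _ hchain (Set.subset_insert z B)
  rw [this]; exact Set.mem_insert z B

private theorem root_mem_branch (T : STree α) {r : α} {B : Set α} (hr : T.IsRoot r)
    (hB : T.IsBranch B) : r ∈ B :=
  mem_branch T hB hr.1 fun b hb => Or.inl (hr.2 b (hB.1.1 hb))

/-- If `w < y`, there is a son of `w` lying (non-strictly) below `y`, which is moreover
below every node strictly above `w` and below `y`. -/
private theorem exists_son_le (T : STree α) (hht : T.HeightLeOmega) {w y : α}
    (hwy : T.lt w y) :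
    ∃ s, T.IsSon w s ∧ T.le s y ∧ ∀ u, T.lt w u → T.le u y → T.le s u := by
  have hy : y ∈ T.nodes := T.lt_mem_right hwy
  have hsub : {u | T.lt w u ∧ T.le u y} ⊆ insert y (T.pred y) := by
    rintro u ⟨_, h | ⟨rfl, _⟩⟩
    · exact Set.mem_insert_of_mem _ h
    · exact Set.mem_insert _ _
  have hfin : {u | T.lt w u ∧ T.le u y}.Finite := (((hht y hy).insert y).subset hsub)
  obtain ⟨s, hs, hmin⟩ := exists_lt_min T hfin ⟨y, hwy, tleRefl T hy⟩
  have hcomp : ∀ u ∈ {u | T.lt w u ∧ T.le u y}, T.le s u := by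
    rintro u ⟨hwu, huy⟩
    have hnus : ¬ T.lt u s := hmin u ⟨hwu, huy⟩
    rcases huy with huy | ⟨rfl, hu⟩
    · rcases hs.2 with hsy | ⟨rfl, _⟩
      · rcases T.pred_linear hsy huy with h | h | h
        · exact Or.inl h
        · exact Or.inr ⟨h, T.lt_mem_right hs.1⟩
        · exact absurd h hnus
      · exact absurd huy hnus
    · exact hs.2
  refine ⟨s, ⟨hs.1, ?_⟩, hs.2, fun u hwu huy => hcomp u ⟨hwu, huy⟩⟩
  rintro ⟨u, hwu, hus⟩
  exact hmin u ⟨hwu, tleTrans T (Or.inl hus) hs.2⟩ hus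

/-- Under local strictness the leaf of a son is contained in the leaf of its father. -/
private theorem leaf_subset_of_son (T : STree α) (leaf : α → Set β)
    (hLS : T.LocallyStrict leaf) {w x : α} (hson : T.IsSon w x) : leaf x ⊆ leaf w := by
  have hw : w ∈ T.nodes := T.lt_mem_left hson.1
  have hnmax : ¬ T.IsMax w := fun hmax => hmax.2 x hson.1
  intro p hp
  rw [(hLS w hw hnmax).1]
  exact Set.mem_biUnion hson hp

/-- Under local strictness (with height ≤ ω) leaves are nonincreasing. -/
private theorem leaf_mono (T : STree α) (leaf : α → Set β) (hht : T.HeightLeOmega)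
    (hLS : T.LocallyStrict leaf) : ∀ {v x : α}, T.lt v x → leaf x ⊆ leaf v := by
  suffices h : ∀ (n : ℕ) (v x : α), T.lt v x → {u | T.lt v u ∧ T.lt u x}.ncard = n →
      leaf x ⊆ leaf v by
    intro v x hvx
    exact h _ v x hvx rfl
  intro n
  induction n using Nat.strong_induction_on with
  | _ n IH =>
    intro v x hvx hcard
    have hxnode : x ∈ T.nodes := T.lt_mem_right hvx
    have hSsub : {u | T.lt v u ∧ T.lt u x} ⊆ T.pred x := fun u hu => hu.2
    have hSfin : {u | T.lt v u ∧ T.lt u x}.Finite := (hht x hxnode).subset hSsub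
    by_cases hS : {u | T.lt v u ∧ T.lt u x}.Nonempty
    · obtain ⟨w, hwS, hwmax⟩ := exists_lt_max T hSfin hS
      have hsonx : T.IsSon w x := by
        refine ⟨hwS.2, ?_⟩
        rintro ⟨u, hwu, hux⟩
        exact hwmax u ⟨T.lt_trans hwS.1 hwu, hux⟩ hwu
      have h1 : leaf x ⊆ leaf w := leaf_subset_of_son T leaf hLS hsonx
      have hss : {u | T.lt v u ∧ T.lt u w} ⊂ {u | T.lt v u ∧ T.lt u x} := by
        constructor
        · rintro u ⟨hvu, huw⟩
          exact ⟨hvu, T.lt_trans huw hwS.2⟩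
        · intro hsub
          exact T.lt_irrefl w (hsub hwS).2
      have hlt : {u | T.lt v u ∧ T.lt u w}.ncard < n :=
        hcard ▸ Set.ncard_lt_ncard hss hSfin
      exact fun p hp => IH _ hlt v w hwS.1 rfl (h1 hp)
    · have hson : T.IsSon v x := by
        refine ⟨hvx, ?_⟩
        rintro ⟨u, hvu, hux⟩
        exact hS ⟨u, hvu, hux⟩
      exact leaf_subset_of_son T leaf hLS hson

end Aux

/-- A foliage tree with least node and height ≤ ω is locally strict
iff it is splittable and its flesh equals its yield. -/
theorem locallyStrict_iff_splittable_and_flesh_eq_yield {α : Type u} {β : Type v}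
    (T : STree α) (leaf : α → Set β)
    (hroot : ∃ r, T.IsRoot r) (hht : T.HeightLeOmega) :
    STree.LocallyStrict T leaf ↔
      (STree.Splittable T leaf ∧ STree.flesh T leaf = STree.yield T leaf) := by
  constructor
  · intro hLS
    have mono : ∀ {v x : α}, T.lt v x → leaf x ⊆ leaf v := leaf_mono T leaf hht hLS
    constructor
    · -- Splittable
      rintro x y ⟨hx, hy, hnxy, hnyx⟩
      obtain ⟨r, hr⟩ := hroot
      have hWx : {w | T.le w x ∧ T.le w y} ⊆ T.pred x := by
        rintro w ⟨hwx, hwy⟩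
        rcases hwx with h | ⟨rfl, _⟩
        · exact h
        · exact absurd hwy hnxy
      have hWfin : {w | T.le w x ∧ T.le w y}.Finite := (hht x hx).subset hWx
      obtain ⟨w, hwW, hwmax⟩ := exists_lt_max T hWfin ⟨r, hr.2 x hx, hr.2 y hy⟩
      have hwx : T.lt w x := hWx hwW
      have hwy : T.lt w y := by
        rcases hwW.2 with h | ⟨rfl, _⟩
        · exact h
        · exact absurd hwW.1 hnyx
      obtain ⟨s, hs, hsx, -⟩ := exists_son_le T hht hwx
      obtain ⟨s', hs', hs'y, -⟩ := exists_son_le T hht hwy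
      have hne : s ≠ s' := by
        rintro rfl
        exact hwmax s ⟨hsx, hs'y⟩ hs.1
      have hdisj := (hLS w (T.lt_mem_left hwx) (fun hmax => hmax.2 x hwx)).2 s hs s' hs' hne
      have h1 : leaf x ⊆ leaf s := by
        rcases hsx with h | ⟨rfl, _⟩
        · exact mono h
        · exact subset_rfl
      have h2 : leaf y ⊆ leaf s' := by
        rcases hs'y with h | ⟨rfl, _⟩
        · exact mono h
        · exact subset_rfl
      exact Set.subset_eq_empty (Set.inter_subset_inter h1 h2) hdisj
    · -- flesh = yield
      apply Set.Subset.antisymm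
      · -- flesh ⊆ yield, via Zorn
        intro p hp
        obtain ⟨x₀, hx₀, hpx₀⟩ := Set.mem_iUnion₂.mp hp
        obtain ⟨M, hM0, hMmem, hMmax⟩ :=
          zorn_subset_nonempty {C : Set α | T.IsChain C ∧ ∀ c ∈ C, p ∈ leaf c}
            (fun c hcS hc _hne => by
              refine ⟨⋃₀ c, ⟨⟨?_, ?_⟩, ?_⟩, fun s hs => Set.subset_sUnion_of_mem hs⟩
              · rintro a ⟨C, hCc, haC⟩
                exact (hcS hCc).1.1 haC
              · rintro a ⟨C1, hC1, ha⟩ b ⟨C2, hC2, hb⟩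
                rcases hc.total hC1 hC2 with h | h
                · exact (hcS hC2).1.2 a (h ha) b hb
                · exact (hcS hC1).1.2 a ha b (h hb)
              · rintro a ⟨C, hCc, haC⟩
                exact (hcS hCc).2 a haC)
            {x₀}
            ⟨⟨fun a ha => by rwa [Set.mem_singleton_iff.mp ha],
              fun a ha b hb => by
                rw [Set.mem_singleton_iff.mp ha, Set.mem_singleton_iff.mp hb]
                exact Or.inl (tleRefl T hx₀)⟩,
              fun c hc => by rwa [Set.mem_singleton_iff.mp hc]⟩
        have hx₀M : x₀ ∈ M := hM0 rfl
        -- M is a branch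
        have hbranch : T.IsBranch M := by
          refine ⟨hMmem.1, fun C' hC' hsub => ?_⟩
          by_contra hne
          obtain ⟨z, hzC', hzM⟩ : ∃ z ∈ C', z ∉ M := by
            by_contra h
            push_neg at h
            exact hne (Set.Subset.antisymm hsub h)
          have hzn : z ∈ T.nodes := hC'.1 hzC'
          have hcomp : ∀ b ∈ M, T.le z b ∨ T.le b z := fun b hb =>
            hC'.2 z hzC' b (hsub hb)
          by_cases hA : ∃ b ∈ M, T.lt z b
          · obtain ⟨b, hbM, hzb⟩ := hA
            have hpz : p ∈ leaf z := mono hzb (hMmem.2 b hbM)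
            have hins : insert z M ∈ {C : Set α | T.IsChain C ∧ ∀ c ∈ C, p ∈ leaf c} := by
              refine ⟨chain_insert T hMmem.1 hzn hcomp, ?_⟩
              intro c hc
              rcases Set.mem_insert_iff.mp hc with h | h
              · rw [h]; exact hpz
              · exact hMmem.2 c h
            have := hMmax hins (Set.subset_insert z M)
            exact hzM (this (Set.mem_insert z M))
          · -- z above all of M
            push_neg at hA
            have hltM : ∀ b ∈ M, T.lt b z := by
              intro b hb
              rcases hcomp b hb with h | h
              · rcases h with h | ⟨rfl, _⟩
                · exact absurd h (hA b hb)
                · exact absurd hb hzM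
              · rcases h with h | ⟨rfl, _⟩
                · exact h
                · exact absurd hb hzM
            have hMfin : M.Finite := (hht z hzn).subset fun b hb => hltM b hb
            obtain ⟨x, hxM, hxmax⟩ := exists_lt_max T hMfin ⟨x₀, hx₀M⟩
            have hxn : x ∈ T.nodes := hMmem.1.1 hxM
            have hxnotmax : ¬ T.IsMax x := fun hmax => hmax.2 z (hltM x hxM)
            have hpx : p ∈ leaf x := hMmem.2 x hxM
            rw [(hLS x hxn hxnotmax).1] at hpx
            obtain ⟨s, hson, hps⟩ := Set.mem_iUnion₂.mp hpx
            have hsM : s ∉ M := fun hsMm => hxmax s hsMm hson.1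
            have hlex : ∀ b ∈ M, T.le b x := by
              intro b hb
              rcases hMmem.1.2 b hb x hxM with h | h
              · exact h
              · rcases h with h | ⟨rfl, hn⟩
                · exact absurd h (hxmax b hb)
                · exact Or.inr ⟨rfl, hn⟩
            have hins : insert s M ∈ {C : Set α | T.IsChain C ∧ ∀ c ∈ C, p ∈ leaf c} := by
              refine ⟨chain_insert T hMmem.1 (T.lt_mem_right hson.1)
                (fun b hb => Or.inr (Or.inl (tltOfLeOfLt T (hlex b hb) hson.1))), ?_⟩
              intro c hc
              rcases Set.mem_insert_iff.mp hc with h | h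
              · rw [h]; exact hps
              · exact hMmem.2 c h
            have := hMmax hins (Set.subset_insert s M)
            exact hsM (this (Set.mem_insert s M))
        refine Set.mem_iUnion₂.mpr ⟨M, hbranch, ?_⟩
        exact Set.mem_iInter₂.mpr fun b hb => hMmem.2 b hb
      · -- yield ⊆ flesh
        intro p hp
        obtain ⟨B, hB, hpB⟩ := Set.mem_iUnion₂.mp hp
        obtain ⟨r, hr⟩ := hroot
        have hrB : r ∈ B := root_mem_branch T hr hB
        exact Set.mem_iUnion₂.mpr ⟨r, hr.1, Set.mem_iInter₂.mp hpB r hrB⟩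
  · rintro ⟨hsp, hfy⟩
    intro x hx hxmax
    have hcomp2 : ∀ {a b : α}, a ∈ T.nodes → b ∈ T.nodes → ∀ {p : β},
        p ∈ leaf a → p ∈ leaf b → T.le a b ∨ T.le b a := by
      intro a b ha hb p hpa hpb
      by_contra h
      push_neg at h
      have hne : (leaf a ∩ leaf b).Nonempty := ⟨p, hpa, hpb⟩
      exact hne.ne_empty (hsp ⟨ha, hb, h.1, h.2⟩)
    constructor
    · apply Set.Subset.antisymm
      · -- leaf x ⊆ ⋃ sons
        intro p hp
        have hpf : p ∈ STree.flesh T leaf := Set.mem_iUnion₂.mpr ⟨x, hx, hp⟩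
        rw [hfy] at hpf
        obtain ⟨B, hB, hpB⟩ := Set.mem_iUnion₂.mp hpf
        have hpB' : ∀ b ∈ B, p ∈ leaf b := Set.mem_iInter₂.mp hpB
        have hxB : x ∈ B :=
          mem_branch T hB hx fun b hb => hcomp2 hx (hB.1.1 hb) hp (hpB' b hb)
        have hblex : (∀ b ∈ B, T.le b x) → False := by
          intro hall
          obtain ⟨v, hv⟩ : ∃ v, T.lt x v := by
            by_contra h
            push_neg at h
            exact hxmax ⟨hx, h⟩
          have hvB : v ∈ B := by
            refine mem_branch T hB (T.lt_mem_right hv) fun b hb => ?_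
            exact Or.inr (Or.inl (tltOfLeOfLt T (hall b hb) hv))
          exact T.lt_irrefl x (tltOfLtOfLe T hv (hall v hvB))
        have hy : ∃ y ∈ B, T.lt x y := by
          by_contra h
          push_neg at h
          refine hblex fun b hb => ?_
          rcases hB.1.2 x hxB b hb with h' | h'
          · rcases h' with h' | ⟨rfl, hn⟩
            · exact absurd h' (h b hb)
            · exact Or.inr ⟨rfl, hn⟩
          · exact h'
        obtain ⟨y, hyB, hxy⟩ := hy
        obtain ⟨s, hson, hsy, hsmin⟩ := exists_son_le T hht hxy
        have hsB : s ∈ B := by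
          refine mem_branch T hB (T.lt_mem_right hson.1) fun b hb => ?_
          rcases hB.1.2 x hxB b hb with hxb | hbx
          · rcases hxb with hxb | ⟨rfl, _⟩
            · rcases hB.1.2 b hb y hyB with hby | hyb
              · exact Or.inl (hsmin b hxb hby)
              · exact Or.inl (tleTrans T hsy hyb)
            · exact Or.inr (Or.inl hson.1)
          · exact Or.inr (tleTrans T hbx (Or.inl hson.1))
        exact Set.mem_iUnion₂.mpr ⟨s, hson, hpB' s hsB⟩
      · -- ⋃ sons ⊆ leaf x
        intro p hp
        obtain ⟨s, hson, hps⟩ := Set.mem_iUnion₂.mp hp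
        have hsn : s ∈ T.nodes := T.lt_mem_right (hson : T.IsSon x s).1
        have hpf : p ∈ STree.flesh T leaf := Set.mem_iUnion₂.mpr ⟨s, hsn, hps⟩
        rw [hfy] at hpf
        obtain ⟨B, hB, hpB⟩ := Set.mem_iUnion₂.mp hpf
        have hpB' : ∀ b ∈ B, p ∈ leaf b := Set.mem_iInter₂.mp hpB
        have hsB : s ∈ B :=
          mem_branch T hB hsn fun b hb => hcomp2 hsn (hB.1.1 hb) hps (hpB' b hb)
        have hxB : x ∈ B := by
          refine mem_branch T hB hx fun b hb => ?_
          rcases hB.1.2 s hsB b hb with hsb | hbs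
          · exact Or.inl (Or.inl (tltOfLtOfLe T (hson : T.IsSon x s).1 hsb))
          · rcases hbs with hbs | ⟨heq, _⟩
            · rcases T.pred_linear (hson : T.IsSon x s).1 hbs with h | h | h
              · exact Or.inl (Or.inl h)
              · exact Or.inl (Or.inr ⟨h, hx⟩)
              · exact Or.inr (Or.inl h)
            · rw [heq]; exact Or.inl (Or.inl (hson : T.IsSon x s).1)
        exact hpB' x hxB
    · -- sons have pairwise disjoint leaves
      intro s hs s' hs' hne
      apply hsp
      refine ⟨T.lt_mem_right (hs : T.IsSon x s).1, T.lt_mem_right (hs' : T.IsSon x s').1, ?_, ?_⟩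
      · rintro (h | ⟨rfl, _⟩)
        · exact (hs' : T.IsSon x s').2 ⟨s, (hs : T.IsSon x s).1, h⟩
        · exact hne rfl
      · rintro (h | ⟨rfl, _⟩)
        · exact (hs : T.IsSon x s).2 ⟨s', (hs' : T.IsSon x s').1, h⟩
        · exact hne rfl
end

section
/- Let A and B be foliage trees with all leaves nonempty, x a node of A, y a node of B. Suppose x has infinitely many sons in A, and there is a finite set F such that every son s of x in A not in F is also a son of y in B with A_s ⊆ B_s. Then shoot_A(x) π-refines shoot_B(y). -/
universe u u' v

/-- If a node `x` of `A` has infinitely many sons, all but finitely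
many of which are also sons of `y` in `B` with smaller leaves, then
`shoot_A(x)` π-refines `shoot_B(y)` (leaves are assumed nonempty). -/
theorem shoot_piRefines {α : Type u} {β : Type v}
    (A : STree α) (leafA : α → Set β) (B : STree α) (leafB : α → Set β)
    (hA : ∀ x ∈ A.nodes, (leafA x).Nonempty) (hB : ∀ x ∈ B.nodes, (leafB x).Nonempty)
    (x y : α) (hx : x ∈ A.nodes) (hy : y ∈ B.nodes)
    (hinf : (A.sons x).Infinite)
    (F : Set α) (hF : F.Finite)
    (hsons : ∀ s ∈ A.sons x \ F, s ∈ B.sons y ∧ leafA s ⊆ leafB s) :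
    STree.PiRefines (A.shoot leafA x) (B.shoot leafB y) := by
  rintro D ⟨C, hCsub, hCcof, rfl⟩ _
  set C' : Set α := (A.sons x \ F) ∩ C with hC'
  have hsub' : C' ⊆ A.sons x := fun s hs => hs.1.1
  have hcompl : A.sons x \ C' ⊆ F ∪ (B.sons y \ C) := by
    rintro s ⟨hsx, hsC'⟩
    by_cases hsF : s ∈ F
    · exact Or.inl hsF
    · refine Or.inr ⟨(hsons s ⟨hsx, hsF⟩).1, fun hsC => hsC' ⟨⟨hsx, hsF⟩, hsC⟩⟩
  have hfin : (A.sons x \ C').Finite := (hF.union hCcof).subset hcompl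
  have hC'inf : C'.Infinite := by
    intro hC'fin
    exact hinf ((hC'fin.union hfin).subset (fun s hs => by
      by_cases h : s ∈ C'
      · exact Or.inl h
      · exact Or.inr ⟨hs, h⟩))
  obtain ⟨s₀, hs₀⟩ := hC'inf.nonempty
  refine ⟨⋃ s ∈ C', leafA s, ⟨C', hsub', hfin, rfl⟩, ?_, ?_⟩
  · obtain ⟨b, hb⟩ := hA s₀ (A.lt_mem_right (hs₀.1.1.1))
    intro h
    have : b ∈ (⋃ s ∈ C', leafA s) := Set.mem_biUnion hs₀ hb
    rw [h] at this; exact this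
  · intro b hb
    obtain ⟨s, hs, hbs⟩ := Set.mem_iUnion₂.mp hb
    exact Set.mem_biUnion hs.2 ((hsons s hs.1).2 hbs)
end

section
/- Suppose a foliage tree H shoots into a foliage tree F and F grows into a topological space X. Then H grows into the subspace X ∩ flesh(H) of X. -/
universe u u' v

/-- If `H` shoots into `F` and `F` grows into `X`, then `H` grows into
the subspace `X ∩ flesh(H)`. -/
theorem growsInto_of_shootsInto {α : Type u} {α' : Type u'} {β : Type v}
    [TopologicalSpace β]
    (H : STree α) (leafH : α → Set β) (F : STree α') (leafF : α' → Set β)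
    (X : Set β)
    (hshoots : STree.ShootsInto H leafH F leafF)
    (hgrows : STree.GrowsInto F leafF X) :
    STree.GrowsInto H leafH (X ∩ STree.flesh H leafH) := by
  intro p hp U hU hUmem
  obtain ⟨hpX, hpF⟩ := hp
  -- extract an open V with p ∈ V and V ∩ (X ∩ flesh) ⊆ U
  rw [mem_nhdsWithin] at hUmem
  obtain ⟨V, hVopen, hpV, hVsub⟩ := hUmem
  -- apply hgrows to U' = V ∩ X
  have hU' : V ∩ X ∈ nhdsWithin p X := by
    rw [Set.inter_comm]; exact inter_mem_nhdsWithin X (hVopen.mem_nhds hpV)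
  obtain ⟨z, hzscope, hzref⟩ := hgrows p hpX (V ∩ X) Set.inter_subset_right hU'
  obtain ⟨x, hxscope, hxref⟩ := hshoots p hpF z hzscope
  refine ⟨x, hxscope, ?_⟩
  intro D hD hDne
  rw [Set.mem_singleton_iff] at hD
  subst hD
  have hU'ne : V ∩ X ≠ ∅ := Set.nonempty_iff_ne_empty.mp ⟨p, hpV, hpX⟩
  obtain ⟨G, hG, hGne, hGsub⟩ := hzref (V ∩ X) rfl hU'ne
  obtain ⟨G', hG', hG'ne, hG'sub⟩ := hxref G hG hGne
  refine ⟨G', hG', hG'ne, ?_⟩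
  -- G' ⊆ flesh H
  obtain ⟨C, hC, _, rfl⟩ := hG'
  intro q hq
  obtain ⟨s, hs⟩ := Set.mem_iUnion.mp hq
  obtain ⟨hsC, hsleaf⟩ := Set.mem_iUnion.mp hs
  have hsnode : s ∈ H.nodes := H.lt_mem_right (hC hsC).1
  have hqflesh : q ∈ STree.flesh H leafH := Set.mem_biUnion hsnode hsleaf
  have hqVX : q ∈ V ∩ X := hGsub (hG'sub (Set.mem_biUnion hsC hsleaf))
  exact hVsub ⟨hqVX.1, hqVX.2, hqflesh⟩
end

section
/- Let γ be a consistent family of grafts for a tree T. Then the hybrid of T and γ — the partial order on supp(T,γ) ∪ ⋃_{G∈γ} impl(G) whose order relation is the transitive closure of the union of <_T and all <_G restricted to this node set — is itself a tree: the relation is irreflexive and transitive, and the strict predecessors of every node are well-ordered. -/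
universe u u' v

namespace HybridProof

open STree

variable {α : Type u}

/-- The explicit description of the hybrid order. -/
def HR (T : STree α) (γ : Set (STree α)) (x y : α) : Prop :=
  (x ∈ supp T γ ∧ y ∈ supp T γ ∧ T.lt x y) ∨
  (∃ G ∈ γ, y ∈ implant G ∧ ∃ r ∈ G.roots, x ∈ supp T γ ∧ (T.lt x r ∨ x = r)) ∨
  (∃ G ∈ γ, x ∈ implant G ∧ y ∈ supp T γ ∧ ∃ m ∈ G.maxNodes, G.lt x m ∧ (T.lt m y ∨ m = y)) ∨
  (∃ G ∈ γ, x ∈ implant G ∧ y ∈ implant G ∧ G.lt x y) ∨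
  (∃ G ∈ γ, ∃ D ∈ γ, G ≠ D ∧ x ∈ implant G ∧ y ∈ implant D ∧
     ∃ m ∈ G.maxNodes, ∃ r ∈ D.roots, G.lt x m ∧ (T.lt m r ∨ m = r))

section Basic

variable {T : STree α} {γ : Set (STree α)} (hγ : STree.ConsistentGrafts T γ)
include hγ
set_option linter.unusedSectionVars false

lemma graft_of_mem {G : STree α} (hG : G ∈ γ) : IsGraft T G := hγ.1 G hG

lemma root_unique {G : STree α} {r r' : α} (hr : r ∈ G.roots) (hr' : r' ∈ G.roots) :
    r = r' := by
  rcases hr.2 r' hr'.1 with h | h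
  · rcases hr'.2 r hr.1 with h' | h'
    · exact absurd (G.lt_trans h h') (G.lt_irrefl r)
    · exact h'.1.symm
  · exact h.1

lemma supp_subset_T : supp T γ ⊆ T.nodes := fun _ h => h.1

lemma implant_not_T {G : STree α} (hG : G ∈ γ) {x : α} (hx : x ∈ implant G) :
    x ∉ T.nodes := by
  intro hxT
  have h := (graft_of_mem hγ hG).2.2.2.2.2.2
  exact absurd (Set.mem_inter hx hxT) (by rw [h]; exact id)

lemma implant_disj {G D : STree α} (hG : G ∈ γ) (hD : D ∈ γ) (hne : G ≠ D)
    {x : α} (hxG : x ∈ implant G) (hxD : x ∈ implant D) : False := by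
  have h := hγ.2.1 G hG D hD hne
  exact absurd (Set.mem_inter hxG hxD) (by rw [h]; exact id)

lemma implant_unique {G D : STree α} (hG : G ∈ γ) (hD : D ∈ γ)
    {x : α} (hxG : x ∈ implant G) (hxD : x ∈ implant D) : G = D := by
  by_contra hne
  exact implant_disj hγ hG hD hne hxG hxD

lemma supp_not_implant {G : STree α} (hG : G ∈ γ) {x : α} (hx : x ∈ supp T γ)
    (hx' : x ∈ implant G) : False :=
  implant_not_T hγ hG hx' (supp_subset_T hγ hx)

lemma node_split {G : STree α} {x : α} (hx : x ∈ G.nodes) :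
    x ∈ G.roots ∨ x ∈ G.maxNodes ∨ x ∈ implant G := by
  by_cases h : x ∈ G.roots ∪ G.maxNodes
  · rcases h with h | h
    · exact Or.inl h
    · exact Or.inr (Or.inl h)
  · exact Or.inr (Or.inr ⟨hx, h⟩)

lemma root_lt_max {G : STree α} (hG : G ∈ γ) {r m : α} (hr : r ∈ G.roots)
    (hm : m ∈ G.maxNodes) : T.lt r m :=
  (graft_of_mem hγ hG).2.2.2.2.1 r hr m hm

lemma root_glt_implant {G : STree α} {r y : α} (hr : r ∈ G.roots) (hy : y ∈ implant G) :
    G.lt r y := by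
  rcases hr.2 y hy.1 with h | h
  · exact h
  · exact absurd (Or.inl hr) (h.1 ▸ hy.2)

lemma max_not_glt {G : STree α} {m y : α} (hm : m ∈ G.maxNodes) : ¬ G.lt m y :=
  hm.2 y

/-- Roots of grafts are in the support. -/
lemma root_in_supp {G : STree α} (hG : G ∈ γ) {r : α} (hr : r ∈ G.roots) :
    r ∈ supp T γ := by
  refine ⟨(graft_of_mem hγ hG).2.2.1 hr, ?_⟩
  intro hmem
  simp only [Set.mem_iUnion] at hmem
  obtain ⟨D, hD, hrD⟩ := hmem
  obtain ⟨⟨rD, hrD', hlt⟩, hnab⟩ := hrD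
  by_cases hDG : D = G
  · subst hDG
    exact T.lt_irrefl r (root_unique hγ hrD' hr ▸ hlt)
  · rcases hγ.2.2 D hD G hG hDG rD hrD' r hr with hinc | ⟨m, hm, hle⟩ | ⟨m, hm, hle⟩
    · exact hinc.2.2.1 (Or.inl hlt)
    · -- m ∈ G.maxNodes, T.le m rD ; but r <_T m, so r < m ≤ rD < r
      have hrm : T.lt r m := root_lt_max hγ hG hr hm
      rcases hle with hle | ⟨heq, _⟩
      · exact T.lt_irrefl r (T.lt_trans (T.lt_trans hrm hle) hlt)
      · exact T.lt_irrefl r (T.lt_trans (heq ▸ hrm) hlt)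
    · -- m ∈ D.maxNodes, T.le m r : contradicts r ∉ above
      exact hnab (Set.mem_biUnion hm hle)

/-- Maximal nodes of grafts are in the support. -/
lemma max_in_supp {G : STree α} (hG : G ∈ γ) {m : α} (hm : m ∈ G.maxNodes) :
    m ∈ supp T γ := by
  refine ⟨(graft_of_mem hγ hG).2.2.2.1 hm, ?_⟩
  intro hmem
  simp only [Set.mem_iUnion] at hmem
  obtain ⟨D, hD, hmD⟩ := hmem
  obtain ⟨⟨rD, hrD, hlt⟩, hnab⟩ := hmD
  obtain ⟨rG, hrG⟩ := (graft_of_mem hγ hG).2.1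
  have hrGm : T.lt rG m := root_lt_max hγ hG hrG hm
  by_cases hDG : D = G
  · subst hDG
    exact hnab (Set.mem_biUnion hm (Or.inr ⟨rfl, (graft_of_mem hγ hD).2.2.2.1 hm⟩))
  · rcases hγ.2.2 D hD G hG hDG rD hrD rG hrG with hinc | ⟨m', hm', hle⟩ | ⟨m', hm', hle⟩
    · -- rD and rG both T-predecessors of m, hence comparable
      rcases T.pred_linear hlt hrGm with h | h | h
      · exact hinc.2.2.1 (Or.inl h)
      · exact hinc.2.2.1 (Or.inr ⟨h, hinc.1⟩)
      · exact hinc.2.2.2 (Or.inl h)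
    · -- m' ∈ G.maxNodes, m' ≤ rD < m : either m' = m (contra) or incomp (contra)
      have hm'm : T.lt m' m := by
        rcases hle with hle | ⟨heq, _⟩
        · exact T.lt_trans hle hlt
        · exact heq ▸ hlt
      by_cases hmm : m' = m
      · exact T.lt_irrefl m (hmm ▸ hm'm)
      · exact ((graft_of_mem hγ hG).2.2.2.2.2.1 m' hm' m hm hmm).2.2.1 (Or.inl hm'm)
    · -- m' ∈ D.maxNodes, m' ≤ rG < m, contradicts m ∉ above m'... need T.le m' m
      refine hnab (Set.mem_biUnion hm' ?_)
      rcases hle with hle | ⟨heq, _⟩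
      · exact Or.inl (T.lt_trans hle hrGm)
      · exact Or.inl (heq ▸ hrGm)

end Basic

end HybridProof
namespace HybridProof

open STree

variable {α : Type u}

section Basic2

variable {T : STree α} {γ : Set (STree α)} (hγ : STree.ConsistentGrafts T γ)
include hγ
set_option linter.unusedSectionVars false

/-- A support node strictly above the root of a graft lies above some max node. -/
lemma supp_above_root {G : STree α} (hG : G ∈ γ) {r x : α} (hr : r ∈ G.roots)
    (hx : x ∈ supp T γ) (hlt : T.lt r x) : ∃ m ∈ G.maxNodes, T.le m x := by
  by_contra hne
  refine hx.2 (Set.mem_biUnion hG ⟨⟨r, hr, hlt⟩, ?_⟩)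
  intro hmem
  obtain ⟨m, hm, hle⟩ := Set.mem_iUnion₂.1 hmem
  exact hne ⟨m, hm, hle⟩

/-- No support node lies strictly between the root and a max node of a graft. -/
lemma no_supp_between {G : STree α} (hG : G ∈ γ) {r m x : α} (hr : r ∈ G.roots)
    (hm : m ∈ G.maxNodes) (hx : x ∈ supp T γ) (h1 : T.lt r x) (h2 : T.lt x m) : False := by
  obtain ⟨m', hm', hle⟩ := supp_above_root hγ hG hr hx h1
  have hm'm : T.lt m' m := by
    rcases hle with hle | ⟨heq, _⟩
    · exact T.lt_trans hle h2
    · exact heq ▸ h2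
  by_cases hmm : m' = m
  · exact T.lt_irrefl m (hmm ▸ hm'm)
  · exact ((graft_of_mem hγ hG).2.2.2.2.2.1 m' hm' m hm hmm).2.2.1 (Or.inl hm'm)

/-- Distinct grafts have disjoint sets of maximal nodes. -/
lemma max_disj {G D : STree α} (hG : G ∈ γ) (hD : D ∈ γ) (hne : G ≠ D)
    {m : α} (hmG : m ∈ G.maxNodes) (hmD : m ∈ D.maxNodes) : False := by
  obtain ⟨rG, hrG⟩ := (graft_of_mem hγ hG).2.1
  obtain ⟨rD, hrD⟩ := (graft_of_mem hγ hD).2.1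
  have h1 : T.lt rG m := root_lt_max hγ hG hrG hmG
  have h2 : T.lt rD m := root_lt_max hγ hD hrD hmD
  rcases hγ.2.2 G hG D hD hne rG hrG rD hrD with hinc | ⟨m', hm', hle⟩ | ⟨m', hm', hle⟩
  · rcases T.pred_linear h1 h2 with h | h | h
    · exact hinc.2.2.1 (Or.inl h)
    · exact hinc.2.2.1 (Or.inr ⟨h, hinc.1⟩)
    · exact hinc.2.2.2 (Or.inl h)
  · -- m' ∈ D.maxNodes, m' ≤ rG < m, m ∈ D.maxNodes
    have hm'm : T.lt m' m := by
      rcases hle with hle | ⟨heq, _⟩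
      · exact T.lt_trans hle h1
      · exact heq ▸ h1
    by_cases hmm : m' = m
    · exact T.lt_irrefl m (hmm ▸ hm'm)
    · exact ((graft_of_mem hγ hD).2.2.2.2.2.1 m' hm' m hmD hmm).2.2.1 (Or.inl hm'm)
  · have hm'm : T.lt m' m := by
      rcases hle with hle | ⟨heq, _⟩
      · exact T.lt_trans hle h2
      · exact heq ▸ h2
    by_cases hmm : m' = m
    · exact T.lt_irrefl m (hmm ▸ hm'm)
    · exact ((graft_of_mem hγ hG).2.2.2.2.2.1 m' hm' m hmG hmm).2.2.1 (Or.inl hm'm)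

/-- Distinct grafts have distinct roots. -/
lemma roots_distinct {G D : STree α} (hG : G ∈ γ) (hD : D ∈ γ) (hne : G ≠ D)
    {r : α} (hrG : r ∈ G.roots) (hrD : r ∈ D.roots) : False := by
  rcases hγ.2.2 G hG D hD hne r hrG r hrD with hinc | ⟨m, hm, hle⟩ | ⟨m, hm, hle⟩
  · exact hinc.2.2.1 (Or.inr ⟨rfl, hinc.1⟩)
  · have := root_lt_max hγ hD hrD hm
    rcases hle with hle | ⟨heq, _⟩
    · exact T.lt_irrefl m (T.lt_trans hle this)
    · exact T.lt_irrefl m (heq ▸ this)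
  · have := root_lt_max hγ hG hrG hm
    rcases hle with hle | ⟨heq, _⟩
    · exact T.lt_irrefl m (T.lt_trans hle this)
    · exact T.lt_irrefl m (heq ▸ this)

/-- Two maximal nodes of the same graft weakly below a common node coincide. -/
lemma maxes_eq {G : STree α} (hG : G ∈ γ) {m m' x : α} (hm : m ∈ G.maxNodes)
    (hm' : m' ∈ G.maxNodes) (h1 : T.lt m x ∨ m = x) (h2 : T.lt m' x ∨ m' = x) :
    m = m' := by
  by_contra hne
  have hinc := (graft_of_mem hγ hG).2.2.2.2.2.1 m hm m' hm' hne
  rcases h1 with h1 | h1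
  · rcases h2 with h2 | h2
    · rcases T.pred_linear h1 h2 with h | h | h
      · exact hinc.2.2.1 (Or.inl h)
      · exact hne h
      · exact hinc.2.2.2 (Or.inl h)
    · exact hinc.2.2.1 (Or.inl (h2 ▸ h1))
  · rcases h2 with h2 | h2
    · exact hinc.2.2.2 (Or.inl (h1 ▸ h2))
    · exact hne (h1.trans h2.symm)

/-- Maximal nodes of the same graft weakly below comparable nodes coincide. -/
lemma maxes_eq' {G : STree α} (hG : G ∈ γ) {m m' r x : α} (hm : m ∈ G.maxNodes)
    (hm' : m' ∈ G.maxNodes) (h1 : T.lt m r ∨ m = r) (hrx : T.lt r x)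
    (h2 : T.lt m' x ∨ m' = x) : m = m' := by
  refine maxes_eq hγ hG hm hm' ?_ h2
  rcases h1 with h1 | h1
  · exact Or.inl (T.lt_trans h1 hrx)
  · exact Or.inl (h1 ▸ hrx)

end Basic2

end HybridProof
namespace HybridProof

open STree

variable {α : Type u}

section LeHelpers

variable {T : STree α}

lemma tlt_of_le_lt {a b c : α} (h1 : T.lt a b ∨ a = b) (h2 : T.lt b c) : T.lt a c := by
  rcases h1 with h1 | h1
  · exact T.lt_trans h1 h2
  · exact h1 ▸ h2

lemma tlt_of_lt_le {a b c : α} (h1 : T.lt a b) (h2 : T.lt b c ∨ b = c) : T.lt a c := by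
  rcases h2 with h2 | h2
  · exact T.lt_trans h1 h2
  · exact h2 ▸ h1

lemma tle_trans {a b c : α} (h1 : T.lt a b ∨ a = b) (h2 : T.lt b c ∨ b = c) :
    T.lt a c ∨ a = c := by
  rcases h1 with h1 | h1
  · exact Or.inl (tlt_of_lt_le h1 h2)
  · exact h1 ▸ h2

end LeHelpers

section HRBasic

variable {T : STree α} {γ : Set (STree α)}

lemma mem_N_of_supp {x : α} (h : x ∈ supp T γ) : x ∈ hybridNodes T γ := Or.inl h

lemma mem_N_of_implant {G : STree α} (hG : G ∈ γ) {x : α} (h : x ∈ implant G) :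
    x ∈ hybridNodes T γ := Or.inr (Set.mem_biUnion hG h)

lemma mem_N_split {x : α} (h : x ∈ hybridNodes T γ) :
    x ∈ supp T γ ∨ ∃ G ∈ γ, x ∈ implant G := by
  rcases h with h | h
  · exact Or.inl h
  · obtain ⟨G, hG, hx⟩ := Set.mem_iUnion₂.1 h
    exact Or.inr ⟨G, hG, hx⟩

variable (hγ : STree.ConsistentGrafts T γ)
include hγ
set_option linter.unusedSectionVars false

lemma mem_supp_of_T {x : α} (h : x ∈ hybridNodes T γ) (hT : x ∈ T.nodes) :
    x ∈ supp T γ := by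
  rcases mem_N_split h with h | ⟨G, hG, hx⟩
  · exact h
  · exact absurd hT (implant_not_T hγ hG hx)

lemma hr_mem_left {x y : α} (h : HR T γ x y) : x ∈ hybridNodes T γ := by
  rcases h with ⟨hx, _, _⟩ | ⟨G, hG, _, r, hr, hx, _⟩ | ⟨G, hG, hx, _⟩ | ⟨G, hG, hx, _⟩ |
    ⟨G, hG, D, hD, _, hx, _⟩
  · exact mem_N_of_supp hx
  · exact mem_N_of_supp hx
  · exact mem_N_of_implant hG hx
  · exact mem_N_of_implant hG hx
  · exact mem_N_of_implant hG hx

lemma hr_mem_right {x y : α} (h : HR T γ x y) : y ∈ hybridNodes T γ := by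
  rcases h with ⟨_, hy, _⟩ | ⟨G, hG, hy, _⟩ | ⟨G, hG, _, hy, _⟩ | ⟨G, hG, _, hy, _⟩ |
    ⟨G, hG, D, hD, _, _, hy, _⟩
  · exact mem_N_of_supp hy
  · exact mem_N_of_implant hG hy
  · exact mem_N_of_supp hy
  · exact mem_N_of_implant hG hy
  · exact mem_N_of_implant hD hy

lemma hr_irrefl {x : α} (h : HR T γ x x) : False := by
  rcases h with ⟨_, _, h⟩ | ⟨G, hG, hxi, r, hr, hxs, _⟩ | ⟨G, hG, hxi, hxs, _⟩ |
    ⟨G, hG, _, _, h⟩ | ⟨G, hG, D, hD, hne, hxG, hxD, _⟩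
  · exact T.lt_irrefl x h
  · exact supp_not_implant hγ hG hxs hxi
  · exact supp_not_implant hγ hG hxs hxi
  · exact G.lt_irrefl x h
  · exact implant_disj hγ hG hD hne hxG hxD

lemma hr_trans {x y z : α} (hxy : HR T γ x y) (hyz : HR T γ y z) : HR T γ x z := by
  rcases hxy with ⟨hxs, hys, hTxy⟩ | ⟨G, hG, hyG, r, hr, hxs, hxr⟩ |
    ⟨G, hG, hxG, hys, m, hm, hGxm, hmy⟩ | ⟨G, hG, hxG, hyG, hGxy⟩ |
    ⟨G, hG, E, hE, hGE, hxG, hyE, m, hm, rE, hrE, hGxm, hmrE⟩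
  · -- x,y ∈ supp, T.lt x y
    rcases hyz with ⟨_, hzs, hTyz⟩ | ⟨D, hD, hzD, r, hr, _, hyr⟩ |
      ⟨D, hD, hyD, _⟩ | ⟨D, hD, hyD, _⟩ | ⟨D, hD, _, _, _, hyD, _⟩
    · exact Or.inl ⟨hxs, hzs, T.lt_trans hTxy hTyz⟩
    · exact Or.inr (Or.inl ⟨D, hD, hzD, r, hr, hxs, Or.inl (tlt_of_lt_le hTxy hyr)⟩)
    · exact absurd hyD (fun h => supp_not_implant hγ hD hys h)
    · exact absurd hyD (fun h => supp_not_implant hγ hD hys h)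
    · exact absurd hyD (fun h => supp_not_implant hγ hD hys h)
  · -- x ∈ supp, x ≤ r = root G, y ∈ implant G
    rcases hyz with ⟨hys, _, _⟩ | ⟨D, hD, hzD, rD, hrD, hys, _⟩ |
      ⟨D, hD, hyD, hzs, m, hm, hDym, hmz⟩ | ⟨D, hD, hyD, hzD, hDyz⟩ |
      ⟨D, hD, E, hE, hDE, hyD, hzE, m, hm, rE, hrE, hDym, hmrE⟩
    · exact absurd hyG (fun h => supp_not_implant hγ hG hys h)
    · exact absurd hyG (fun h => supp_not_implant hγ hG hys h)
    · obtain rfl : D = G := implant_unique hγ hD hG hyD hyG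
      exact Or.inl ⟨hxs, hzs,
        tlt_of_lt_le (tlt_of_le_lt hxr (root_lt_max hγ hG hr hm)) hmz⟩
    · obtain rfl : D = G := implant_unique hγ hD hG hyD hyG
      exact Or.inr (Or.inl ⟨D, hD, hzD, r, hr, hxs, hxr⟩)
    · obtain rfl : D = G := implant_unique hγ hD hG hyD hyG
      exact Or.inr (Or.inl ⟨E, hE, hzE, rE, hrE, hxs,
        Or.inl (tlt_of_lt_le (tlt_of_le_lt hxr (root_lt_max hγ hG hr hm)) hmrE)⟩)
  · -- x ∈ implant G, G.lt x m, m ≤ y ∈ supp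
    rcases hyz with ⟨_, hzs, hTyz⟩ | ⟨D, hD, hzD, rD, hrD, _, hyrD⟩ |
      ⟨D, hD, hyD, _⟩ | ⟨D, hD, hyD, _⟩ | ⟨D, hD, _, _, _, hyD, _⟩
    · exact Or.inr (Or.inr (Or.inl ⟨G, hG, hxG, hzs, m, hm, hGxm,
        Or.inl (tlt_of_le_lt hmy hTyz)⟩))
    · by_cases hGD : G = D
      · subst hGD
        exact absurd (tlt_of_le_lt (tle_trans hmy hyrD) (root_lt_max hγ hG hrD hm))
          (T.lt_irrefl m)
      · exact Or.inr (Or.inr (Or.inr (Or.inr ⟨G, hG, D, hD, hGD, hxG, hzD, m, hm,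
          rD, hrD, hGxm, tle_trans hmy hyrD⟩)))
    · exact absurd hyD (fun h => supp_not_implant hγ hD hys h)
    · exact absurd hyD (fun h => supp_not_implant hγ hD hys h)
    · exact absurd hyD (fun h => supp_not_implant hγ hD hys h)
  · -- x, y ∈ implant G, G.lt x y
    rcases hyz with ⟨hys, _, _⟩ | ⟨D, hD, hzD, rD, hrD, hys, _⟩ |
      ⟨D, hD, hyD, hzs, m, hm, hDym, hmz⟩ | ⟨D, hD, hyD, hzD, hDyz⟩ |
      ⟨D, hD, E, hE, hDE, hyD, hzE, m, hm, rE, hrE, hDym, hmrE⟩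
    · exact absurd hyG (fun h => supp_not_implant hγ hG hys h)
    · exact absurd hyG (fun h => supp_not_implant hγ hG hys h)
    · obtain rfl : D = G := implant_unique hγ hD hG hyD hyG
      exact Or.inr (Or.inr (Or.inl ⟨D, hD, hxG, hzs, m, hm, D.lt_trans hGxy hDym, hmz⟩))
    · obtain rfl : D = G := implant_unique hγ hD hG hyD hyG
      exact Or.inr (Or.inr (Or.inr (Or.inl ⟨D, hD, hxG, hzD, D.lt_trans hGxy hDyz⟩)))
    · obtain rfl : D = G := implant_unique hγ hD hG hyD hyG
      exact Or.inr (Or.inr (Or.inr (Or.inr ⟨D, hD, E, hE, hDE, hxG, hzE, m, hm,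
        rE, hrE, D.lt_trans hGxy hDym, hmrE⟩)))
  · -- x ∈ implant G, G.lt x m, m ≤ rE, y ∈ implant E
    rcases hyz with ⟨hys, _, _⟩ | ⟨D, hD, hzD, rD, hrD, hys, _⟩ |
      ⟨D, hD, hyD, hzs, m', hm', hDym', hm'z⟩ | ⟨D, hD, hyD, hzD, hDyz⟩ |
      ⟨D, hD, F, hF, hDF, hyD, hzF, m', hm', rF, hrF, hDym', hm'rF⟩
    · exact absurd hyE (fun h => supp_not_implant hγ hE hys h)
    · exact absurd hyE (fun h => supp_not_implant hγ hE hys h)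
    · obtain rfl : D = E := implant_unique hγ hD hE hyD hyE
      exact Or.inr (Or.inr (Or.inl ⟨G, hG, hxG, hzs, m, hm, hGxm,
        Or.inl (tlt_of_lt_le (tlt_of_le_lt hmrE (root_lt_max hγ hD hrE hm')) hm'z)⟩))
    · obtain rfl : D = E := implant_unique hγ hD hE hyD hyE
      exact Or.inr (Or.inr (Or.inr (Or.inr ⟨G, hG, D, hD, hGE, hxG, hzD, m, hm,
        rE, hrE, hGxm, hmrE⟩)))
    · obtain rfl : D = E := implant_unique hγ hD hE hyD hyE
      have hmrF : T.lt m rF :=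
        tlt_of_lt_le (tlt_of_le_lt hmrE (root_lt_max hγ hE hrE hm')) hm'rF
      by_cases hGF : G = F
      · subst hGF
        exact absurd (tlt_of_lt_le hmrF (Or.inl (root_lt_max hγ hG hrF hm)))
          (T.lt_irrefl m)
      · exact Or.inr (Or.inr (Or.inr (Or.inr ⟨G, hG, F, hF, hGF, hxG, hzF, m, hm,
          rF, hrF, hGxm, Or.inl hmrF⟩)))

end HRBasic

end HybridProof
namespace HybridProof

open STree

variable {α : Type u}

section Equiv

variable {T : STree α} {γ : Set (STree α)} (hγ : STree.ConsistentGrafts T γ)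
include hγ
set_option linter.unusedSectionVars false

lemma base_hr {x y : α} (h : hybridBase T γ x y) : HR T γ x y := by
  obtain ⟨hxN, hyN, h⟩ := h
  rcases h with h | ⟨G, hG, hlt⟩
  · exact Or.inl ⟨mem_supp_of_T hγ hxN (T.lt_mem_left h),
      mem_supp_of_T hγ hyN (T.lt_mem_right h), h⟩
  · have hxG : x ∈ G.nodes := G.lt_mem_left hlt
    have hyG : y ∈ G.nodes := G.lt_mem_right hlt
    have hGraft := graft_of_mem hγ hG
    rcases mem_N_split hxN with hxs | ⟨D, hD, hxD⟩
    · -- x ∈ supp: x is the root of G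
      have hxr : x ∈ G.roots := by
        rcases node_split hγ hxG with h' | h' | h'
        · exact h'
        · exact absurd hlt (max_not_glt hγ h')
        · exact absurd h' (fun h'' => supp_not_implant hγ hG hxs h'')
      rcases mem_N_split hyN with hys | ⟨D, hD, hyD⟩
      · rcases node_split hγ hyG with h' | h' | h'
        · obtain rfl : x = y := root_unique hγ hxr h'
          exact absurd hlt (fun h'' => G.lt_irrefl x h'')
        · exact Or.inl ⟨hxs, hys, root_lt_max hγ hG hxr h'⟩
        · exact absurd h' (fun h'' => supp_not_implant hγ hG hys h'')
      · by_cases hDG : D = G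
        · subst hDG
          exact Or.inr (Or.inl ⟨D, hD, hyD, x, hxr, hxs, Or.inr rfl⟩)
        · exfalso
          have hyT : y ∉ T.nodes := implant_not_T hγ hD hyD
          rcases node_split hγ hyG with h' | h' | h'
          · exact hyT (hGraft.2.2.1 h')
          · exact hyT (hGraft.2.2.2.1 h')
          · exact implant_disj hγ hD hG hDG hyD h'
    · -- x ∈ implant D; necessarily D = G
      have hxT : x ∉ T.nodes := implant_not_T hγ hD hxD
      obtain rfl : D = G := by
        by_contra hDG
        rcases node_split hγ hxG with h' | h' | h'
        · exact hxT (hGraft.2.2.1 h')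
        · exact hxT (hGraft.2.2.2.1 h')
        · exact implant_disj hγ hD hG hDG hxD h'
      rcases mem_N_split hyN with hys | ⟨D', hD', hyD'⟩
      · rcases node_split hγ hyG with h' | h' | h'
        · -- y is the root of G: impossible since G.lt x y
          exfalso
          rcases h'.2 x hxG with h'' | h''
          · exact D.lt_irrefl x (D.lt_trans hlt h'')
          · exact D.lt_irrefl x (h''.1 ▸ hlt)
        · exact Or.inr (Or.inr (Or.inl ⟨D, hD, hxD, hys, y, h', hlt, Or.inr rfl⟩))
        · exact absurd h' (fun h'' => supp_not_implant hγ hD hys h'')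
      · obtain rfl : D' = D := by
          by_contra hD'D
          have hyT : y ∉ T.nodes := implant_not_T hγ hD' hyD'
          rcases node_split hγ hyG with h' | h' | h'
          · exact hyT (hGraft.2.2.1 h')
          · exact hyT (hGraft.2.2.2.1 h')
          · exact implant_disj hγ hD' hD hD'D hyD' h'
        exact Or.inr (Or.inr (Or.inr (Or.inl ⟨D', hD', hxD, hyD', hlt⟩)))

lemma hr_hlt {x y : α} (h : HR T γ x y) : hybridLt T γ x y := by
  rcases h with ⟨hxs, hys, hTxy⟩ | ⟨G, hG, hyG, r, hr, hxs, hxr⟩ |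
    ⟨G, hG, hxG, hys, m, hm, hGxm, hmy⟩ | ⟨G, hG, hxG, hyG, hGxy⟩ |
    ⟨G, hG, D, hD, hGD, hxG, hyD, m, hm, rD, hrD, hGxm, hmrD⟩
  · exact Relation.TransGen.single ⟨mem_N_of_supp hxs, mem_N_of_supp hys, Or.inl hTxy⟩
  · have step2 : hybridBase T γ r y :=
      ⟨mem_N_of_supp (root_in_supp hγ hG hr), mem_N_of_implant hG hyG,
        Or.inr ⟨G, hG, root_glt_implant hγ hr hyG⟩⟩
    rcases hxr with hxr | rfl
    · exact Relation.TransGen.head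
        ⟨mem_N_of_supp hxs, mem_N_of_supp (root_in_supp hγ hG hr), Or.inl hxr⟩
        (Relation.TransGen.single step2)
    · exact Relation.TransGen.single step2
  · have step1 : hybridBase T γ x m :=
      ⟨mem_N_of_implant hG hxG, mem_N_of_supp (max_in_supp hγ hG hm),
        Or.inr ⟨G, hG, hGxm⟩⟩
    rcases hmy with hmy | rfl
    · exact Relation.TransGen.tail (Relation.TransGen.single step1)
        ⟨mem_N_of_supp (max_in_supp hγ hG hm), mem_N_of_supp hys, Or.inl hmy⟩
    · exact Relation.TransGen.single step1
  · exact Relation.TransGen.single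
      ⟨mem_N_of_implant hG hxG, mem_N_of_implant hG hyG, Or.inr ⟨G, hG, hGxy⟩⟩
  · have step1 : hybridBase T γ x m :=
      ⟨mem_N_of_implant hG hxG, mem_N_of_supp (max_in_supp hγ hG hm),
        Or.inr ⟨G, hG, hGxm⟩⟩
    have step3 : hybridBase T γ rD y :=
      ⟨mem_N_of_supp (root_in_supp hγ hD hrD), mem_N_of_implant hD hyD,
        Or.inr ⟨D, hD, root_glt_implant hγ hrD hyD⟩⟩
    rcases hmrD with hmrD | rfl
    · exact Relation.TransGen.tail (Relation.TransGen.tail (Relation.TransGen.single step1)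
        ⟨mem_N_of_supp (max_in_supp hγ hG hm), mem_N_of_supp (root_in_supp hγ hD hrD),
          Or.inl hmrD⟩) step3
    · exact Relation.TransGen.tail (Relation.TransGen.single step1) step3

lemma hlt_iff_hr {x y : α} : hybridLt T γ x y ↔ HR T γ x y := by
  constructor
  · intro h
    induction h with
    | single h => exact base_hr hγ h
    | tail _ h2 ih => exact hr_trans hγ ih (base_hr hγ h2)
  · exact hr_hlt hγ

end Equiv

end HybridProof
namespace HybridProof

open STree

variable {α : Type u}

section Inv

variable {T : STree α} {γ : Set (STree α)} (hγ : STree.ConsistentGrafts T γ)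
include hγ
set_option linter.unusedSectionVars false

lemma inv_supp_supp {x y : α} (h : HR T γ x y) (hxs : x ∈ supp T γ) (hys : y ∈ supp T γ) :
    T.lt x y := by
  rcases h with ⟨_, _, h⟩ | ⟨G, hG, hyG, _⟩ | ⟨G, hG, hxG, _⟩ | ⟨G, hG, hxG, _⟩ |
    ⟨G, hG, D, hD, _, hxG, _⟩
  · exact h
  · exact absurd hyG (fun h'' => supp_not_implant hγ hG hys h'')
  · exact absurd hxG (fun h'' => supp_not_implant hγ hG hxs h'')
  · exact absurd hxG (fun h'' => supp_not_implant hγ hG hxs h'')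
  · exact absurd hxG (fun h'' => supp_not_implant hγ hG hxs h'')

lemma inv_impl_supp {G : STree α} (hG : G ∈ γ) {x y : α} (h : HR T γ x y)
    (hxG : x ∈ implant G) (hys : y ∈ supp T γ) :
    ∃ m ∈ G.maxNodes, G.lt x m ∧ (T.lt m y ∨ m = y) := by
  rcases h with ⟨hxs, _⟩ | ⟨D, hD, hyD, _, _, hxs, _⟩ | ⟨D, hD, hxD, _, m, hm, h1, h2⟩ |
    ⟨D, hD, _, hyD, _⟩ | ⟨D, hD, E, hE, _, _, hyE, _⟩
  · exact absurd hxG (fun h'' => supp_not_implant hγ hG hxs h'')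
  · exact absurd hxG (fun h'' => supp_not_implant hγ hG hxs h'')
  · obtain rfl : D = G := implant_unique hγ hD hG hxD hxG
    exact ⟨m, hm, h1, h2⟩
  · exact absurd hyD (fun h'' => supp_not_implant hγ hD hys h'')
  · exact absurd hyE (fun h'' => supp_not_implant hγ hE hys h'')

lemma inv_to_impl {G : STree α} (hG : G ∈ γ) {x y : α} (h : HR T γ x y)
    (hyG : y ∈ implant G) :
    (x ∈ supp T γ ∧ ∃ r ∈ G.roots, (T.lt x r ∨ x = r)) ∨
    (x ∈ implant G ∧ G.lt x y) ∨
    (∃ D ∈ γ, D ≠ G ∧ x ∈ implant D ∧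
      ∃ m ∈ D.maxNodes, ∃ r ∈ G.roots, D.lt x m ∧ (T.lt m r ∨ m = r)) := by
  rcases h with ⟨_, hys, _⟩ | ⟨D, hD, hyD, r, hr, hxs, hxr⟩ | ⟨D, hD, _, hys, _⟩ |
    ⟨D, hD, hxD, hyD, h1⟩ | ⟨D, hD, E, hE, hne, hxD, hyE, m, hm, r, hr, h1, h2⟩
  · exact absurd hyG (fun h'' => supp_not_implant hγ hG hys h'')
  · obtain rfl : D = G := implant_unique hγ hD hG hyD hyG
    exact Or.inl ⟨hxs, r, hr, hxr⟩
  · exact absurd hyG (fun h'' => supp_not_implant hγ hG hys h'')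
  · obtain rfl : D = G := implant_unique hγ hD hG hyD hyG
    exact Or.inr (Or.inl ⟨hxD, h1⟩)
  · obtain rfl : E = G := implant_unique hγ hE hG hyE hyG
    exact Or.inr (Or.inr ⟨D, hD, hne, hxD, m, hm, r, hr, h1, h2⟩)

/-- Helper for linearity between two implants below a common support node. -/
lemma impl_impl_aux {G D : STree α} (hG : G ∈ γ) (hD : D ∈ γ)
    {v w mv mw : α} (hvG : v ∈ implant G) (hwD : w ∈ implant D)
    (hmv : mv ∈ G.maxNodes) (hGv : G.lt v mv) (hmw : mw ∈ D.maxNodes)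
    (hlt : T.lt mv mw) : HR T γ v w := by
  obtain ⟨rD, hrD⟩ := (graft_of_mem hγ hD).2.1
  have hrDmw : T.lt rD mw := root_lt_max hγ hD hrD hmw
  have hGD : G ≠ D := by
    rintro rfl
    by_cases hmm : mv = mw
    · exact T.lt_irrefl mw (hmm ▸ hlt)
    · exact ((graft_of_mem hγ hG).2.2.2.2.2.1 mv hmv mw hmw hmm).2.2.1 (Or.inl hlt)
  rcases T.pred_linear hlt hrDmw with h | h | h
  · exact Or.inr (Or.inr (Or.inr (Or.inr
      ⟨G, hG, D, hD, hGD, hvG, hwD, mv, hmv, rD, hrD, hGv, Or.inl h⟩)))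
  · exact Or.inr (Or.inr (Or.inr (Or.inr
      ⟨G, hG, D, hD, hGD, hvG, hwD, mv, hmv, rD, hrD, hGv, Or.inr h⟩)))
  · exact absurd hlt (fun h' =>
      no_supp_between hγ hD hrD hmw (max_in_supp hγ hG hmv) h h')

/-- Linearity of predecessors of a support node: the asymmetric supp/implant case. -/
lemma linear_supp_aux {x v w : α} (hx : x ∈ supp T γ) (hvs : v ∈ supp T γ)
    {G : STree α} (hG : G ∈ γ) (hwG : w ∈ implant G)
    (hv : HR T γ v x) (hw : HR T γ w x) : HR T γ v w ∨ v = w ∨ HR T γ w v := by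
  obtain ⟨m, hm, hGwm, hmx⟩ := inv_impl_supp hγ hG hw hwG hx
  obtain ⟨r, hr⟩ := (graft_of_mem hγ hG).2.1
  have hrm : T.lt r m := root_lt_max hγ hG hr hm
  have hrx : T.lt r x := tlt_of_lt_le hrm hmx
  have hvx : T.lt v x := inv_supp_supp hγ hv hvs hx
  rcases T.pred_linear hvx hrx with h | h | h
  · exact Or.inl (Or.inr (Or.inl ⟨G, hG, hwG, r, hr, hvs, Or.inl h⟩))
  · exact Or.inl (Or.inr (Or.inl ⟨G, hG, hwG, r, hr, hvs, Or.inr h⟩))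
  · rcases hmx with hmx | rfl
    · rcases T.pred_linear hvx hmx with h' | h' | h'
      · exact absurd h' (fun h'' => no_supp_between hγ hG hr hm hvs h h'')
      · exact Or.inr (Or.inr (Or.inr (Or.inr (Or.inl
          ⟨G, hG, hwG, hvs, m, hm, hGwm, Or.inr h'.symm⟩))))
      · exact Or.inr (Or.inr (Or.inr (Or.inr (Or.inl
          ⟨G, hG, hwG, hvs, m, hm, hGwm, Or.inl h'⟩))))
    · exact absurd hvx (fun h'' => no_supp_between hγ hG hr hm hvs h h'')

/-- Linearity of predecessors of a support node. -/
lemma linear_supp {x v w : α} (hx : x ∈ supp T γ)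
    (hv : HR T γ v x) (hw : HR T γ w x) : HR T γ v w ∨ v = w ∨ HR T γ w v := by
  rcases mem_N_split (hr_mem_left hγ hv) with hvs | ⟨G, hG, hvG⟩
  · rcases mem_N_split (hr_mem_left hγ hw) with hws | ⟨D, hD, hwD⟩
    · rcases T.pred_linear (inv_supp_supp hγ hv hvs hx) (inv_supp_supp hγ hw hws hx)
        with h | h | h
      · exact Or.inl (Or.inl ⟨hvs, hws, h⟩)
      · exact Or.inr (Or.inl h)
      · exact Or.inr (Or.inr (Or.inl ⟨hws, hvs, h⟩))
    · exact linear_supp_aux hγ hx hvs hD hwD hv hw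
  · rcases mem_N_split (hr_mem_left hγ hw) with hws | ⟨D, hD, hwD⟩
    · rcases linear_supp_aux hγ hx hws hG hvG hw hv with h | h | h
      · exact Or.inr (Or.inr h)
      · exact Or.inr (Or.inl h.symm)
      · exact Or.inl h
    · obtain ⟨mv, hmv, hGv, hmvx⟩ := inv_impl_supp hγ hG hv hvG hx
      obtain ⟨mw, hmw, hDw, hmwx⟩ := inv_impl_supp hγ hD hw hwD hx
      by_cases hGD : G = D
      · subst hGD
        have : mv = mw := maxes_eq hγ hG hmv hmw hmvx hmwx
        subst this
        rcases G.pred_linear hGv hDw with h | h | h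
        · exact Or.inl (Or.inr (Or.inr (Or.inr (Or.inl ⟨G, hG, hvG, hwD, h⟩))))
        · exact Or.inr (Or.inl h)
        · exact Or.inr (Or.inr (Or.inr (Or.inr (Or.inr (Or.inl ⟨G, hG, hwD, hvG, h⟩)))))
      · have hne : mv ≠ mw := fun h => max_disj hγ hG hD hGD (h ▸ hmv) hmw
        have hcomp : T.lt mv mw ∨ T.lt mw mv := by
          rcases hmvx with h1 | rfl
          · rcases hmwx with h2 | rfl
            · rcases T.pred_linear h1 h2 with h | h | h
              · exact Or.inl h
              · exact absurd h hne
              · exact Or.inr h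
            · exact Or.inl h1
          · rcases hmwx with h2 | h2
            · exact Or.inr h2
            · exact absurd h2.symm hne
        rcases hcomp with h | h
        · exact Or.inl (impl_impl_aux hγ hG hD hvG hwD hmv hGv hmw h)
        · exact Or.inr (Or.inr (impl_impl_aux hγ hD hG hwD hvG hmw hDw hmv h))

/-- Classification of hybrid predecessors of an implant node. -/
lemma classify {G : STree α} (hG : G ∈ γ) {x r v : α} (hx : x ∈ implant G)
    (hr : r ∈ G.roots) (hv : HR T γ v x) :
    (v ∈ implant G ∧ G.lt v x) ∨ HR T γ v r ∨ v = r := by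
  rcases inv_to_impl hγ hG hv hx with ⟨hvs, r', hr', hle⟩ | ⟨hvG, h⟩ |
    ⟨D, hD, hne, hvD, m, hm, r', hr', hDvm, hmr'⟩
  · obtain rfl : r' = r := root_unique hγ hr' hr
    rcases hle with h | h
    · exact Or.inr (Or.inl (Or.inl ⟨hvs, root_in_supp hγ hG hr, h⟩))
    · exact Or.inr (Or.inr h)
  · exact Or.inl ⟨hvG, h⟩
  · obtain rfl : r' = r := root_unique hγ hr' hr
    exact Or.inr (Or.inl (Or.inr (Or.inr (Or.inl
      ⟨D, hD, hvD, root_in_supp hγ hG hr, m, hm, hDvm, hmr'⟩))))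

/-- The root lies hybrid-below every implant node of its graft. -/
lemma hr_root_implant {G : STree α} (hG : G ∈ γ) {r v : α} (hr : r ∈ G.roots)
    (hv : v ∈ implant G) : HR T γ r v :=
  Or.inr (Or.inl ⟨G, hG, hv, r, hr, root_in_supp hγ hG hr, Or.inr rfl⟩)

/-- Linearity of predecessors in the hybrid order. -/
lemma hr_pred_linear {x v w : α} (hv : HR T γ v x) (hw : HR T γ w x) :
    HR T γ v w ∨ v = w ∨ HR T γ w v := by
  rcases mem_N_split (hr_mem_right hγ hv) with hxs | ⟨G, hG, hxG⟩
  · exact linear_supp hγ hxs hv hw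
  · obtain ⟨r, hr⟩ := (graft_of_mem hγ hG).2.1
    have hle_lt : ∀ {a}, (HR T γ a r ∨ a = r) → ∀ {b}, b ∈ implant G → HR T γ a b := by
      intro a ha b hb
      rcases ha with ha | rfl
      · exact hr_trans hγ ha (hr_root_implant hγ hG hr hb)
      · exact hr_root_implant hγ hG hr hb
    rcases classify hγ hG hxG hr hv with ⟨hvG, hv'⟩ | hv'
    · rcases classify hγ hG hxG hr hw with ⟨hwG, hw'⟩ | hw'
      · rcases G.pred_linear hv' hw' with h | h | h
        · exact Or.inl (Or.inr (Or.inr (Or.inr (Or.inl ⟨G, hG, hvG, hwG, h⟩))))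
        · exact Or.inr (Or.inl h)
        · exact Or.inr (Or.inr (Or.inr (Or.inr (Or.inr (Or.inl ⟨G, hG, hwG, hvG, h⟩)))))
      · exact Or.inr (Or.inr (hle_lt hw' hvG))
    · rcases classify hγ hG hxG hr hw with ⟨hwG, hw'⟩ | hw'
      · exact Or.inl (hle_lt hv' hwG)
      · rcases hv' with hv' | rfl
        · rcases hw' with hw' | rfl
          · exact linear_supp hγ (root_in_supp hγ hG hr) hv' hw'
          · exact Or.inl hv'
        · rcases hw' with hw' | rfl
          · exact Or.inr (Or.inr hw')
          · exact Or.inr (Or.inl rfl)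

end Inv

end HybridProof
namespace HybridProof

open STree

variable {α : Type u}

section WF

variable {T : STree α} {γ : Set (STree α)} (hγ : STree.ConsistentGrafts T γ)
include hγ
set_option linter.unusedSectionVars false

/-- Well-foundedness of predecessors of a support node. -/
lemma wf_supp {y : α} (hy : y ∈ supp T γ) (A : Set α) (hA : ∀ a ∈ A, HR T γ a y)
    (hne : A.Nonempty) : ∃ m ∈ A, ∀ a ∈ A, ¬ HR T γ a m := by
  classical
  set B : Set α := {t | (t ∈ A ∧ t ∈ supp T γ) ∨
    (∃ G ∈ γ, t ∈ G.roots ∧ ∃ a ∈ A, a ∈ implant G)} with hBdef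
  have hB : ∀ t ∈ B, T.lt t y := by
    rintro t (⟨htA, hts⟩ | ⟨G, hG, htr, a, ha, haG⟩)
    · exact inv_supp_supp hγ (hA t htA) hts hy
    · obtain ⟨m, hm, _, hmy⟩ := inv_impl_supp hγ hG (hA a ha) haG hy
      exact tlt_of_lt_le (root_lt_max hγ hG htr hm) hmy
  have hBne : B.Nonempty := by
    obtain ⟨a, ha⟩ := hne
    rcases mem_N_split (hr_mem_left hγ (hA a ha)) with has | ⟨G, hG, haG⟩
    · exact ⟨a, Or.inl ⟨ha, has⟩⟩
    · obtain ⟨r, hr⟩ := (graft_of_mem hγ hG).2.1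
      exact ⟨r, Or.inr ⟨G, hG, hr, a, ha, haG⟩⟩
  obtain ⟨m₀, hm₀B, hmin⟩ := T.pred_wf B hB hBne
  have hm₀s : m₀ ∈ supp T γ := by
    rcases hm₀B with ⟨_, h⟩ | ⟨G, hG, hr, _⟩
    · exact h
    · exact root_in_supp hγ hG hr
  by_cases hm₀A : m₀ ∈ A
  · refine ⟨m₀, hm₀A, ?_⟩
    intro a ha hcon
    rcases mem_N_split (hr_mem_left hγ hcon) with has | ⟨D, hD, haD⟩
    · exact hmin a (Or.inl ⟨ha, has⟩) (inv_supp_supp hγ hcon has hm₀s)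
    · obtain ⟨m, hm, _, hmm₀⟩ := inv_impl_supp hγ hD hcon haD hm₀s
      obtain ⟨rD, hrD⟩ := (graft_of_mem hγ hD).2.1
      exact hmin rD (Or.inr ⟨D, hD, hrD, a, ha, haD⟩)
        (tlt_of_lt_le (root_lt_max hγ hD hrD hm) hmm₀)
  · obtain ⟨G, hG, hm₀r, a₀, ha₀, ha₀G⟩ : ∃ G ∈ γ, m₀ ∈ G.roots ∧ ∃ a ∈ A, a ∈ implant G := by
      rcases hm₀B with ⟨h, _⟩ | h
      · exact absurd h hm₀A
      · exact h
    obtain ⟨mstar, hmst, _, hmsty⟩ := inv_impl_supp hγ hG (hA a₀ ha₀) ha₀G hy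
    have hsub : ∀ a ∈ A ∩ implant G, G.lt a mstar := by
      rintro a ⟨haA, haG⟩
      obtain ⟨ma, hma, hGama, hmay⟩ := inv_impl_supp hγ hG (hA a haA) haG hy
      exact (maxes_eq hγ hG hma hmst hmay hmsty) ▸ hGama
    obtain ⟨b, ⟨hbA, hbG⟩, hbmin⟩ := G.pred_wf (A ∩ implant G) hsub ⟨a₀, ha₀, ha₀G⟩
    refine ⟨b, hbA, ?_⟩
    intro a ha hab
    rcases inv_to_impl hγ hG hab hbG with ⟨has, r', hr', hle⟩ | ⟨haG, hGab⟩ |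
      ⟨D, hD, _, haD, m, hm, r', hr', _, hmr'⟩
    · obtain rfl : r' = m₀ := root_unique hγ hr' hm₀r
      rcases hle with h | rfl
      · exact hmin a (Or.inl ⟨ha, has⟩) h
      · exact hm₀A ha
    · exact hbmin a ⟨ha, haG⟩ hGab
    · obtain rfl : r' = m₀ := root_unique hγ hr' hm₀r
      obtain ⟨rD, hrD⟩ := (graft_of_mem hγ hD).2.1
      exact hmin rD (Or.inr ⟨D, hD, hrD, a, ha, haD⟩)
        (tlt_of_lt_le (root_lt_max hγ hD hrD hm) hmr')

/-- Well-foundedness of predecessors of an implant node. -/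
lemma wf_impl {G : STree α} (hG : G ∈ γ) {y : α} (hy : y ∈ implant G) (A : Set α)
    (hA : ∀ a ∈ A, HR T γ a y) (hne : A.Nonempty) :
    ∃ m ∈ A, ∀ a ∈ A, ¬ HR T γ a m := by
  classical
  obtain ⟨r, hr⟩ := (graft_of_mem hγ hG).2.1
  set A₂ : Set α := {a | a ∈ A ∧ (HR T γ a r ∨ a = r)} with hA₂def
  by_cases hA₂ : A₂.Nonempty
  · set A₃ : Set α := {a | a ∈ A₂ ∧ a ≠ r} with hA₃def
    by_cases hA₃ : A₃.Nonempty
    · have hA₃pred : ∀ a ∈ A₃, HR T γ a r := by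
        rintro a ⟨⟨_, h⟩, hne'⟩
        rcases h with h | h
        · exact h
        · exact absurd h hne'
      obtain ⟨b, hbA₃, hbmin⟩ := wf_supp hγ (root_in_supp hγ hG hr) A₃ hA₃pred hA₃
      have hbr : HR T γ b r := hA₃pred b hbA₃
      refine ⟨b, hbA₃.1.1, ?_⟩
      intro a ha hab
      have har : HR T γ a r := hr_trans hγ hab hbr
      have hane : a ≠ r := by
        rintro rfl
        exact hr_irrefl hγ (hr_trans hγ hab hbr)
      exact hbmin a ⟨⟨ha, Or.inl har⟩, hane⟩ hab
    · -- A₃ empty: r itself is the only element of A₂, hence r ∈ A and r is minimal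
      obtain ⟨a₂, ha₂⟩ := hA₂
      have ha₂r : a₂ = r := by
        by_contra h
        exact hA₃ ⟨a₂, ha₂, h⟩
      subst ha₂r
      refine ⟨a₂, ha₂.1, ?_⟩
      intro a ha har
      have hane : a ≠ a₂ := by
        rintro rfl
        exact hr_irrefl hγ har
      exact hA₃ ⟨a, ⟨ha, Or.inl har⟩, hane⟩
  · -- A₂ empty: all elements of A are implant-predecessors of y in G
    have hAy : ∀ a ∈ A, a ∈ implant G ∧ G.lt a y := by
      intro a ha
      rcases classify hγ hG hy hr (hA a ha) with h | h
      · exact h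
      · exact absurd ⟨a, ha, h⟩ hA₂
    obtain ⟨b, hbA, hbmin⟩ := G.pred_wf A (fun a ha => (hAy a ha).2) hne
    refine ⟨b, hbA, ?_⟩
    intro a ha hab
    rcases classify hγ hG (hAy b hbA).1 hr hab with ⟨haG, hGab⟩ | h
    · exact hbmin a ha hGab
    · exact absurd ⟨a, ha, h⟩ hA₂

end WF

end HybridProof
/-- The hybrid of a tree `T` and a consistent family `γ` of grafts —
the transitive closure of the union of the orders on the node set
`supp(T,γ) ∪ ⋃ implants` — is itself a tree. -/
theorem hybrid_isTree {α : Type u} (T : STree α) (γ : Set (STree α))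
    (hγ : STree.ConsistentGrafts T γ) :
    ∃ H : STree α, H.nodes = STree.hybridNodes T γ ∧
      ∀ x y, H.lt x y ↔ STree.hybridLt T γ x y := by
  open HybridProof in
  refine ⟨⟨STree.hybridNodes T γ, STree.hybridLt T γ, ?_, ?_, ?_, ?_, ?_, ?_⟩,
    rfl, fun x y => Iff.rfl⟩
  · intro x y h
    exact hr_mem_left hγ ((hlt_iff_hr hγ).1 h)
  · intro x y h
    exact hr_mem_right hγ ((hlt_iff_hr hγ).1 h)
  · intro x h
    exact hr_irrefl hγ ((hlt_iff_hr hγ).1 h)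
  · intro x y z h1 h2
    exact Relation.TransGen.trans h1 h2
  · intro x v w hv hw
    rcases hr_pred_linear hγ ((hlt_iff_hr hγ).1 hv) ((hlt_iff_hr hγ).1 hw) with h | h | h
    · exact Or.inl (hr_hlt hγ h)
    · exact Or.inr (Or.inl h)
    · exact Or.inr (Or.inr (hr_hlt hγ h))
  · intro x A hA hne
    have hA' : ∀ a ∈ A, HR T γ a x := fun a ha => (hlt_iff_hr hγ).1 (hA a ha)
    obtain ⟨a₀, ha₀⟩ := hne
    rcases mem_N_split (hr_mem_right hγ (hA' a₀ ha₀)) with hxs | ⟨G, hG, hxG⟩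
    · obtain ⟨m, hm, hmin⟩ := wf_supp hγ hxs A hA' ⟨a₀, ha₀⟩
      exact ⟨m, hm, fun a ha h => hmin a ha ((hlt_iff_hr hγ).1 h)⟩
    · obtain ⟨m, hm, hmin⟩ := wf_impl hγ hG hxG A hA' ⟨a₀, ha₀⟩
      exact ⟨m, hm, fun a ha h => hmin a ha ((hlt_iff_hr hγ).1 h)⟩
end

section
/- Let γ be a consistent family of grafts for a tree T, and H = hybr(T,γ) the hybrid tree. If T has a least node then H has a least node, equal to the least node of T, and this node lies in supp(T,γ). If T has no maximal nodes, then H has no maximal nodes. If T and every graft in γ are κ-branching (every non-maximal node has exactly κ sons), then H is κ-branching. If T and every graft in γ have height at most ω, then H has height at most ω. -/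
universe u u' v

section HybridAux

open STree

variable {α : Type u}

namespace STree

lemma lt_asymm'' (T : STree α) {x y : α} (h : T.lt x y) : ¬ T.lt y x :=
  fun h' => T.lt_irrefl x (T.lt_trans h h')

lemma le_trans'' (T : STree α) {x y z : α} (h : T.le x y) (h' : T.le y z) : T.le x z := by
  rcases h with h | ⟨rfl, hm⟩
  · rcases h' with h' | ⟨rfl, _⟩
    · exact Or.inl (T.lt_trans h h')
    · exact Or.inl h
  · exact h'

lemma lt_of_le_of_lt'' (T : STree α) {x y z : α} (h : T.le x y) (h' : T.lt y z) : T.lt x z := by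
  rcases h with h | ⟨rfl, _⟩
  · exact T.lt_trans h h'
  · exact h'

lemma lt_of_lt_of_le'' (T : STree α) {x y z : α} (h : T.lt x y) (h' : T.le y z) : T.lt x z := by
  rcases h' with h' | ⟨rfl, _⟩
  · exact T.lt_trans h h'
  · exact h

lemma le_refl'' (T : STree α) {x : α} (hx : x ∈ T.nodes) : T.le x x := Or.inr ⟨rfl, hx⟩

lemma le_of_lt'' (T : STree α) {x y : α} (h : T.lt x y) : T.le x y := Or.inl h

lemma le_mem_left'' (T : STree α) {x y : α} (h : T.le x y) : x ∈ T.nodes := by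
  rcases h with h | ⟨rfl, hm⟩
  · exact T.lt_mem_left h
  · exact hm

lemma not_lt_of_le'' (T : STree α) {x y : α} (h : T.le x y) : ¬ T.lt y x := by
  rcases h with h | ⟨rfl, _⟩
  · exact T.lt_asymm'' h
  · exact T.lt_irrefl x

lemma mem_roots'' {G : STree α} {r : α} : r ∈ G.roots ↔ G.IsRoot r := Iff.rfl

lemma mem_maxNodes'' {G : STree α} {m : α} : m ∈ G.maxNodes ↔ G.IsMax m := Iff.rfl

lemma root_unique'' {G : STree α} {r r' : α} (h : r ∈ G.roots) (h' : r' ∈ G.roots) :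
    r = r' := by
  rcases h.2 r' h'.1 with hlt | ⟨h, _⟩
  · rcases h'.2 r h.1 with hlt' | ⟨h', _⟩
    · exact absurd (G.lt_trans hlt hlt') (G.lt_irrefl r)
    · exact h'.symm
  · exact h

lemma root_lt'' {G : STree α} {r x : α} (h : r ∈ G.roots) (hx : x ∈ G.nodes)
    (hne : x ≠ r) : G.lt r x := by
  rcases h.2 x hx with hlt | ⟨rfl, _⟩
  · exact hlt
  · exact absurd rfl hne

lemma mem_implant'' {G : STree α} {x : α} :
    x ∈ implant G ↔ x ∈ G.nodes ∧ x ∉ G.roots ∧ x ∉ G.maxNodes := by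
  simp [implant, Set.mem_diff, not_or, and_assoc]

lemma graft_trichotomy {G : STree α} {x : α} (h : x ∈ G.nodes) :
    x ∈ G.roots ∨ x ∈ G.maxNodes ∨ x ∈ implant G := by
  by_cases h1 : x ∈ G.roots
  · exact Or.inl h1
  by_cases h2 : x ∈ G.maxNodes
  · exact Or.inr (Or.inl h2)
  · exact Or.inr (Or.inr (mem_implant''.2 ⟨h, h1, h2⟩))

lemma exists_gt_of_not_max {G : STree α} {x : α} (hx : x ∈ G.nodes)
    (h : x ∉ G.maxNodes) : ∃ y, G.lt x y := by
  by_contra hc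
  push_neg at hc
  exact h ⟨hx, hc⟩

lemma mem_explant'' {T G : STree α} {v : α} :
    v ∈ explant T G ↔ (∃ r ∈ G.roots, T.lt r v) ∧ ∀ m ∈ G.maxNodes, ¬ T.le m v := by
  simp [explant, Set.mem_diff, above, Set.mem_setOf_eq]

lemma mem_supp'' {T : STree α} {γ : Set (STree α)} {x : α} :
    x ∈ supp T γ ↔ x ∈ T.nodes ∧ ∀ G ∈ γ, x ∉ explant T G := by
  simp [supp, Set.mem_diff]

lemma supp_mem_nodes {T : STree α} {γ : Set (STree α)} {x : α} (h : x ∈ supp T γ) :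
    x ∈ T.nodes := (mem_supp''.1 h).1


section Consistent

variable {T : STree α} {γ : Set (STree α)} (hγ : ConsistentGrafts T γ)
include hγ

lemma graft_of_mem'' {G : STree α} (hG : G ∈ γ) : IsGraft T G := hγ.1 G hG

lemma implant_not_T {G : STree α} (hG : G ∈ γ) {x : α} (hx : x ∈ implant G) :
    x ∉ T.nodes := by
  intro hT
  have h := (hγ.1 G hG).2.2.2.2.2.2
  exact absurd h (by
    rw [Set.eq_empty_iff_forall_notMem]
    push_neg
    exact ⟨x, hx, hT⟩)

lemma implant_disj'' {G G' : STree α} (hG : G ∈ γ) (hG' : G' ∈ γ) {x : α}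
    (hx : x ∈ implant G) (hx' : x ∈ implant G') : G = G' := by
  by_contra hne
  have h := hγ.2.1 G hG G' hG' hne
  rw [Set.eq_empty_iff_forall_notMem] at h
  exact h x ⟨hx, hx'⟩

lemma exists_root'' {G : STree α} (hG : G ∈ γ) : ∃ r, r ∈ G.roots := (hγ.1 G hG).2.1

lemma roots_sub_T {G : STree α} (hG : G ∈ γ) : G.roots ⊆ T.nodes := (hγ.1 G hG).2.2.1

lemma maxNodes_sub_T {G : STree α} (hG : G ∈ γ) : G.maxNodes ⊆ T.nodes :=
  (hγ.1 G hG).2.2.2.1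

lemma root_T_lt_max {G : STree α} (hG : G ∈ γ) {r m : α} (hr : r ∈ G.roots)
    (hm : m ∈ G.maxNodes) : T.lt r m := (hγ.1 G hG).2.2.2.2.1 r hr m hm

lemma max_incomp {G : STree α} (hG : G ∈ γ) {m m' : α} (hm : m ∈ G.maxNodes)
    (hm' : m' ∈ G.maxNodes) (hne : m ≠ m') : T.Incomp m m' :=
  (hγ.1 G hG).2.2.2.2.2.1 m hm m' hm' hne

lemma max_not_T_lt_max {G : STree α} (hG : G ∈ γ) {m m' : α} (hm : m ∈ G.maxNodes)
    (hm' : m' ∈ G.maxNodes) (h : T.lt m m') : False := by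
  by_cases hne : m = m'
  · exact T.lt_irrefl m (hne ▸ h)
  · exact (max_incomp hγ hG hm hm' hne).2.2.1 (Or.inl h)

lemma roots_ne {G G' : STree α} (hG : G ∈ γ) (hG' : G' ∈ γ) (hne : G ≠ G')
    {r r' : α} (hr : r ∈ G.roots) (hr' : r' ∈ G'.roots) : r ≠ r' := by
  rintro rfl
  rcases hγ.2.2 G hG G' hG' hne r hr r hr' with hi | ⟨m, hm, hle⟩ | ⟨m, hm, hle⟩
  · exact hi.2.2.1 (T.le_refl'' (roots_sub_T hγ hG hr))
  · exact T.not_lt_of_le'' hle (root_T_lt_max hγ hG' hr' hm)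
  · exact T.not_lt_of_le'' hle (root_T_lt_max hγ hG hr hm)

lemma max_graft_unique {G G' : STree α} (hG : G ∈ γ) (hG' : G' ∈ γ) {m : α}
    (hm : m ∈ G.maxNodes) (hm' : m ∈ G'.maxNodes) : G = G' := by
  by_contra hne
  obtain ⟨r, hr⟩ := exists_root'' hγ hG
  obtain ⟨r', hr'⟩ := exists_root'' hγ hG'
  have h1 : T.lt r m := root_T_lt_max hγ hG hr hm
  have h2 : T.lt r' m := root_T_lt_max hγ hG' hr' hm'
  rcases hγ.2.2 G hG G' hG' hne r hr r' hr' with hi | ⟨m', hm2, hle⟩ | ⟨m', hm2, hle⟩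
  · rcases T.pred_linear h1 h2 with h | h | h
    · exact hi.2.2.1 (Or.inl h)
    · exact hi.2.2.1 (Or.inr ⟨h, T.lt_mem_left h1⟩)
    · exact hi.2.2.2 (Or.inl h)
  · exact max_not_T_lt_max hγ hG' hm2 hm' (T.lt_of_le_of_lt'' hle h1)
  · exact max_not_T_lt_max hγ hG hm2 hm (T.lt_of_le_of_lt'' hle h2)

lemma root_mem_supp {G : STree α} (hG : G ∈ γ) {r : α} (hr : r ∈ G.roots) :
    r ∈ supp T γ := by
  rw [mem_supp'']
  refine ⟨roots_sub_T hγ hG hr, fun G' hG' hcon => ?_⟩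
  rw [mem_explant''] at hcon
  obtain ⟨⟨r', hr', hlt⟩, hnab⟩ := hcon
  by_cases hne : G = G'
  · subst hne
    have heq : r' = r := root_unique'' hr' hr
    exact T.lt_irrefl r (heq ▸ hlt)
  · rcases hγ.2.2 G' hG' G hG (Ne.symm hne) r' hr' r hr with hi | ⟨m, hm, hle⟩ | ⟨m, hm, hle⟩
    · exact hi.2.2.1 (Or.inl hlt)
    · exact T.not_lt_of_le'' (T.le_trans'' hle (T.le_of_lt'' hlt)) (root_T_lt_max hγ hG hr hm)
    · exact hnab m hm hle

lemma max_mem_supp {G : STree α} (hG : G ∈ γ) {y : α} (hy : y ∈ G.maxNodes) :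
    y ∈ supp T γ := by
  rw [mem_supp'']
  have hyT : y ∈ T.nodes := maxNodes_sub_T hγ hG hy
  refine ⟨hyT, fun G' hG' hcon => ?_⟩
  rw [mem_explant''] at hcon
  obtain ⟨⟨r', hr', hlt⟩, hnab⟩ := hcon
  by_cases hne : G = G'
  · subst hne
    exact hnab y hy (T.le_refl'' hyT)
  · obtain ⟨r, hr⟩ := exists_root'' hγ hG
    have h1 : T.lt r y := root_T_lt_max hγ hG hr hy
    rcases hγ.2.2 G hG G' hG' hne r hr r' hr' with hi | ⟨m, hm, hle⟩ | ⟨m, hm, hle⟩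
    · rcases T.pred_linear h1 hlt with h | h | h
      · exact hi.2.2.1 (Or.inl h)
      · exact hi.2.2.1 (Or.inr ⟨h, T.lt_mem_left h1⟩)
      · exact hi.2.2.2 (Or.inl h)
    · exact hnab m hm (T.le_trans'' hle (T.le_of_lt'' h1))
    · exact max_not_T_lt_max hγ hG hm hy (T.lt_of_le_of_lt'' hle hlt)

omit hγ in lemma supp_mem_hybrid {x : α} (h : x ∈ supp T γ) : x ∈ hybridNodes T γ := Or.inl h

omit hγ in lemma implant_mem_hybrid {G : STree α} (hG : G ∈ γ) {x : α} (h : x ∈ implant G) :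
    x ∈ hybridNodes T γ := Or.inr (Set.mem_biUnion hG h)

lemma gnode_mem_hybrid {G : STree α} (hG : G ∈ γ) {x : α} (h : x ∈ G.nodes) :
    x ∈ hybridNodes T γ := by
  rcases graft_trichotomy h with h | h | h
  · exact supp_mem_hybrid (root_mem_supp hγ hG h)
  · exact supp_mem_hybrid (max_mem_supp hγ hG h)
  · exact implant_mem_hybrid hG h

lemma supp_not_implant {G : STree α} (hG : G ∈ γ) {x : α} (h : x ∈ supp T γ) :
    x ∉ implant G := fun hc => implant_not_T hγ hG hc (supp_mem_nodes h)

omit hγ in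
/-- If `x ∈ supp` lies strictly above the root of a graft `G ∈ γ`, then it lies
above some maximal node of `G`. -/
lemma supp_escape {G : STree α} (hG : G ∈ γ) {r x : α} (hr : r ∈ G.roots)
    (hx : x ∈ supp T γ) (h : T.lt r x) : ∃ m ∈ G.maxNodes, T.le m x := by
  have := (mem_supp''.1 hx).2 G hG
  rw [mem_explant''] at this
  push_neg at this
  exact this ⟨r, hr, h⟩

end Consistent

/-- Explicit description of the hybrid order. -/
def LRel (T : STree α) (γ : Set (STree α)) (x y : α) : Prop :=
  (T.lt x y) ∨
  (∃ G ∈ γ, y ∈ implant G ∧ ∃ r ∈ G.roots, T.le x r) ∨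
  (∃ G ∈ γ, x ∈ implant G ∧ y ∈ T.nodes ∧ ∃ m ∈ G.maxNodes, G.lt x m ∧ T.le m y) ∨
  (∃ G ∈ γ, x ∈ implant G ∧ y ∈ implant G ∧ G.lt x y) ∨
  (∃ G ∈ γ, ∃ G' ∈ γ, x ∈ implant G ∧ y ∈ implant G' ∧
     ∃ m ∈ G.maxNodes, G.lt x m ∧ ∃ r ∈ G'.roots, T.le m r)

section LRelFacts

variable {T : STree α} {γ : Set (STree α)} (hγ : ConsistentGrafts T γ)
include hγ

lemma implant_graft_eq {G G' : STree α} (hG : G ∈ γ) (hG' : G' ∈ γ) {b : α}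
    (hb : b ∈ implant G) (hb' : b ∈ G'.nodes) : G' = G := by
  rcases graft_trichotomy hb' with h | h | h
  · exact absurd (roots_sub_T hγ hG' h) (implant_not_T hγ hG hb)
  · exact absurd (maxNodes_sub_T hγ hG' h) (implant_not_T hγ hG hb)
  · exact implant_disj'' hγ hG' hG h hb

lemma T_node_pos {G' : STree α} (hG' : G' ∈ γ) {b : α} (hbT : b ∈ T.nodes)
    (hb' : b ∈ G'.nodes) : b ∈ G'.roots ∨ b ∈ G'.maxNodes := by
  rcases graft_trichotomy hb' with h | h | h
  · exact Or.inl h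
  · exact Or.inr h
  · exact absurd hbT (implant_not_T hγ hG' h)

omit hγ in
lemma root_not_gt {G : STree α} {b y : α} (hyr : y ∈ G.roots) (hb : b ∈ G.nodes)
    (h : G.lt b y) : False :=
  G.lt_irrefl y (G.lt_of_le_of_lt'' (hyr.2 b hb) h)

lemma base_LRel {x y : α} (h : hybridBase T γ x y) : LRel T γ x y := by
  obtain ⟨hx, hy, hT | ⟨G, hG, hlt⟩⟩ := h
  · exact Or.inl hT
  · have hxn := G.lt_mem_left hlt
    have hyn := G.lt_mem_right hlt
    rcases graft_trichotomy hxn with hxr | hxm | hxi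
    · rcases graft_trichotomy hyn with hyr | hym | hyi
      · exact absurd ((root_unique'' hyr hxr) ▸ hlt) (G.lt_irrefl _)
      · exact Or.inl (root_T_lt_max hγ hG hxr hym)
      · exact Or.inr (Or.inl ⟨G, hG, hyi, x, hxr, T.le_refl'' (roots_sub_T hγ hG hxr)⟩)
    · exact absurd hlt (hxm.2 y)
    · rcases graft_trichotomy hyn with hyr | hym | hyi
      · exact absurd (root_not_gt hyr hxn hlt) id
      · exact Or.inr (Or.inr (Or.inl ⟨G, hG, hxi, maxNodes_sub_T hγ hG hym, y, hym, hlt,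
          T.le_refl'' (maxNodes_sub_T hγ hG hym)⟩))
      · exact Or.inr (Or.inr (Or.inr (Or.inl ⟨G, hG, hxi, hyi, hlt⟩)))

lemma LRel_step {x b y : α} (hL : LRel T γ x b) (h : hybridBase T γ b y) :
    LRel T γ x y := by
  obtain ⟨hbN, hyN, hT | ⟨G', hG', hlt⟩⟩ := h
  · -- T-step
    rcases hL with hxb | ⟨G, hG, hbi, r, hr, hxr⟩ | ⟨G, hG, hxi, hbT, m, hm, hxm, hmb⟩ |
      ⟨G, hG, hxi, hbi, hxb⟩ | ⟨G, hG, G', hG', hxi, hbi, m, hm, hxm, r, hr, hmr⟩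
    · exact Or.inl (T.lt_trans hxb hT)
    · exact absurd (T.lt_mem_left hT) (implant_not_T hγ hG hbi)
    · exact Or.inr (Or.inr (Or.inl ⟨G, hG, hxi, T.lt_mem_right hT, m, hm, hxm,
        T.le_trans'' hmb (T.le_of_lt'' hT)⟩))
    · exact absurd (T.lt_mem_left hT) (implant_not_T hγ hG hbi)
    · exact absurd (T.lt_mem_left hT) (implant_not_T hγ hG' hbi)
  · -- G'-step
    have hbn' := G'.lt_mem_left hlt
    have hyn' := G'.lt_mem_right hlt
    rcases hL with hxb | ⟨G, hG, hbi, r, hr, hxr⟩ | ⟨G, hG, hxi, hbT, m, hm, hxm, hmb⟩ |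
      ⟨G, hG, hxi, hbi, hxb⟩ | ⟨G, hG, G'', hG'', hxi, hbi, m, hm, hxm, r, hr, hmr⟩
    · -- C1 : T.lt x b
      have hbT := T.lt_mem_right hxb
      rcases T_node_pos hγ hG' hbT hbn' with hbr | hbm
      · rcases graft_trichotomy hyn' with hyr | hym | hyi
        · exact absurd (root_not_gt hyr hbn' hlt) id
        · exact Or.inl (T.lt_trans hxb (root_T_lt_max hγ hG' hbr hym))
        · exact Or.inr (Or.inl ⟨G', hG', hyi, b, hbr, T.le_of_lt'' hxb⟩)
      · exact absurd hlt (hbm.2 y)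
    · -- C2 : b ∈ implant G, T.le x r
      obtain rfl : G' = G := implant_graft_eq hγ hG hG' hbi hbn'
      rcases graft_trichotomy hyn' with hyr | hym | hyi
      · exact absurd (root_not_gt hyr hbn' hlt) id
      · exact Or.inl (T.lt_of_le_of_lt'' hxr (root_T_lt_max hγ hG hr hym))
      · exact Or.inr (Or.inl ⟨G', hG, hyi, r, hr, hxr⟩)
    · -- C3 : x ∈ implant G, T.le m b
      rcases T_node_pos hγ hG' hbT hbn' with hbr | hbm
      · rcases graft_trichotomy hyn' with hyr | hym | hyi
        · exact absurd (root_not_gt hyr hbn' hlt) id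
        · exact Or.inr (Or.inr (Or.inl ⟨G, hG, hxi, maxNodes_sub_T hγ hG' hym, m, hm, hxm,
            T.le_trans'' hmb (T.le_of_lt'' (root_T_lt_max hγ hG' hbr hym))⟩))
        · exact Or.inr (Or.inr (Or.inr (Or.inr ⟨G, hG, G', hG', hxi, hyi, m, hm, hxm,
            b, hbr, hmb⟩)))
      · exact absurd hlt (hbm.2 y)
    · -- C4 : x, b ∈ implant G, G.lt x b
      obtain rfl : G' = G := implant_graft_eq hγ hG hG' hbi hbn'
      rcases graft_trichotomy hyn' with hyr | hym | hyi
      · exact absurd (root_not_gt hyr hbn' hlt) id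
      · exact Or.inr (Or.inr (Or.inl ⟨G', hG, hxi, maxNodes_sub_T hγ hG hym, y, hym,
          G'.lt_trans hxb hlt, T.le_refl'' (maxNodes_sub_T hγ hG hym)⟩))
      · exact Or.inr (Or.inr (Or.inr (Or.inl ⟨G', hG, hxi, hyi, G'.lt_trans hxb hlt⟩)))
    · -- C5 : x ∈ implant G, b ∈ implant G''
      obtain rfl : G' = G'' := implant_graft_eq hγ hG'' hG' hbi hbn'
      rcases graft_trichotomy hyn' with hyr | hym | hyi
      · exact absurd (root_not_gt hyr hbn' hlt) id
      · exact Or.inr (Or.inr (Or.inl ⟨G, hG, hxi, maxNodes_sub_T hγ hG'' hym, m, hm, hxm,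
          T.le_trans'' hmr (T.le_of_lt'' (root_T_lt_max hγ hG'' hr hym))⟩))
      · exact Or.inr (Or.inr (Or.inr (Or.inr ⟨G, hG, G', hG'', hxi, hyi, m, hm, hxm,
          r, hr, hmr⟩)))

lemma hybridLt_LRel {x y : α} (h : hybridLt T γ x y) : LRel T γ x y := by
  induction h with
  | single h => exact base_LRel hγ h
  | tail _ h ih => exact LRel_step hγ ih h

end LRelFacts



lemma hybridLt_mem_right {T : STree α} {γ : Set (STree α)} {x y : α}
    (h : hybridLt T γ x y) : y ∈ hybridNodes T γ := by
  induction h with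
  | single h => exact h.2.1
  | tail _ h _ => exact h.2.1

section HybridTree

variable {T : STree α} {γ : Set (STree α)} {H : STree α}
variable (hγ : ConsistentGrafts T γ)
variable (hltH : ∀ x y, H.lt x y ↔ hybridLt T γ x y)
include hγ hltH

omit hγ in
lemma Hlt_of_base {x y : α} (h : hybridBase T γ x y) : H.lt x y :=
  (hltH x y).2 (Relation.TransGen.single h)

omit hγ in
lemma Hlt_of_T {x y : α} (hx : x ∈ hybridNodes T γ) (hy : y ∈ hybridNodes T γ)
    (h : T.lt x y) : H.lt x y := Hlt_of_base hltH ⟨hx, hy, Or.inl h⟩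

lemma Hlt_of_G {G : STree α} (hG : G ∈ γ) {x y : α} (h : G.lt x y) : H.lt x y :=
  Hlt_of_base hltH ⟨gnode_mem_hybrid hγ hG (G.lt_mem_left h),
    gnode_mem_hybrid hγ hG (G.lt_mem_right h), Or.inr ⟨G, hG, h⟩⟩

lemma LRel_of_H {x y : α} (h : H.lt x y) : LRel T γ x y :=
  hybridLt_LRel hγ ((hltH x y).1 h)

omit hγ in
lemma H_mem_right {x y : α} (h : H.lt x y) : y ∈ hybridNodes T γ :=
  hybridLt_mem_right ((hltH x y).1 h)

omit hγ hltH in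
lemma mem_supp_of_T {y : α} (hγ : ConsistentGrafts T γ) (hN : y ∈ hybridNodes T γ)
    (hT : y ∈ T.nodes) : y ∈ supp T γ := by
  rcases hN with h | h
  · exact h
  · obtain ⟨G, hG, hyi⟩ := Set.mem_iUnion₂.1 h
    exact absurd hT (implant_not_T hγ hG hyi)

lemma sons_implant {G : STree α} (hG : G ∈ γ) {x : α} (hx : x ∈ implant G) :
    H.sons x = G.sons x := by
  obtain ⟨hxG, hxnr, hxnm⟩ := mem_implant''.1 hx
  ext s
  simp only [sons, Set.mem_setOf_eq]
  constructor
  · rintro ⟨h1, h2⟩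
    have hsN : s ∈ hybridNodes T γ := H_mem_right hltH h1
    have gson : G.lt x s → G.IsSon x s := by
      intro hxs
      refine ⟨hxs, ?_⟩
      rintro ⟨w, hw1, hw2⟩
      rcases graft_trichotomy (G.lt_mem_right hw1) with hwr | hwm | hwi
      · exact root_not_gt hwr hxG hw1
      · exact hwm.2 s hw2
      · exact h2 ⟨w, Hlt_of_G hγ hltH hG hw1, Hlt_of_G hγ hltH hG hw2⟩
    rcases LRel_of_H hγ hltH h1 with hT | ⟨G1, hG1, hsi, r1, hr1, hxr⟩ |
        ⟨G1, hG1, hxi, hsT, m, hm, hxm, hms⟩ | ⟨G1, hG1, hxi, hsi, hxs⟩ |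
        ⟨G1, hG1, G2, hG2, hxi, hsi, m, hm, hxm, r2, hr2, hmr⟩
    · exact absurd (T.lt_mem_left hT) (implant_not_T hγ hG hx)
    · exact absurd (T.le_mem_left'' hxr) (implant_not_T hγ hG hx)
    · obtain rfl : G = G1 := (implant_disj'' hγ hG1 hG hxi hx).symm
      rcases hms with hms | ⟨heq, _⟩
      · exact absurd ⟨m, Hlt_of_G hγ hltH hG hxm, Hlt_of_T hltH
          (supp_mem_hybrid (max_mem_supp hγ hG hm)) hsN hms⟩ h2
      · subst heq
        exact gson hxm
    · obtain rfl : G = G1 := (implant_disj'' hγ hG1 hG hxi hx).symm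
      exact gson hxs
    · obtain rfl : G = G1 := (implant_disj'' hγ hG1 hG hxi hx).symm
      have hm_supp := max_mem_supp hγ hG hm
      have hs_node : s ∈ G2.nodes := (mem_implant''.1 hsi).1
      have hs_ne : s ≠ r2 := fun he => (mem_implant''.1 hsi).2.1 (he ▸ hr2)
      have h3 : H.lt r2 s := Hlt_of_G hγ hltH hG2 (root_lt'' hr2 hs_node hs_ne)
      rcases hmr with hmr | ⟨heq, _⟩
      · exact absurd ⟨m, Hlt_of_G hγ hltH hG hxm, H.lt_trans (Hlt_of_T hltH
          (supp_mem_hybrid hm_supp) (supp_mem_hybrid (root_mem_supp hγ hG2 hr2)) hmr) h3⟩ h2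
      · subst heq
        exact absurd ⟨m, Hlt_of_G hγ hltH hG hxm, h3⟩ h2
  · rintro ⟨hxs, hns⟩
    have hsG := G.lt_mem_right hxs
    refine ⟨Hlt_of_G hγ hltH hG hxs, ?_⟩
    rintro ⟨w, hw1, hw2⟩
    rcases LRel_of_H hγ hltH hw1 with hT | ⟨G1, hG1, hwi, r1, hr1, hxr⟩ |
        ⟨G1, hG1, hxi, hwT, m, hm, hxm, hmw⟩ | ⟨G1, hG1, hxi, hwi, hxw⟩ |
        ⟨G1, hG1, G2, hG2, hxi, hwi, m, hm, hxm, r2, hr2, hmr⟩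
    · exact absurd (T.lt_mem_left hT) (implant_not_T hγ hG hx)
    · exact absurd (T.le_mem_left'' hxr) (implant_not_T hγ hG hx)
    · -- C3 : w ∈ T.nodes, T.le m w
      obtain rfl : G = G1 := (implant_disj'' hγ hG1 hG hxi hx).symm
      rcases LRel_of_H hγ hltH hw2 with hT' | ⟨G3, hG3, hsi, r3, hr3, hwr⟩ |
          ⟨G3, hG3, hwi', hsT, m2, hm2, hwm2, hm2s⟩ | ⟨G3, hG3, hwi', hsi, hws⟩ |
          ⟨G3, hG3, G4, hG4, hwi', hsi, m2, hm2, hwm2, r4, hr4, hm2r⟩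
      · rcases T_node_pos hγ hG (T.lt_mem_right hT') hsG with hsr | hsm
        · exact root_not_gt hsr hxG hxs
        · exact max_not_T_lt_max hγ hG hm hsm (T.lt_of_le_of_lt'' hmw hT')
      · obtain rfl : G = G3 := implant_graft_eq hγ hG3 hG hsi hsG
        exact T.not_lt_of_le'' (T.le_trans'' hmw hwr) (root_T_lt_max hγ hG hr3 hm)
      · exact absurd hwT (implant_not_T hγ hG3 hwi')
      · exact absurd hwT (implant_not_T hγ hG3 hwi')
      · exact absurd hwT (implant_not_T hγ hG3 hwi')
    · -- C4 : w ∈ implant G, G.lt x w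
      obtain rfl : G = G1 := (implant_disj'' hγ hG1 hG hxi hx).symm
      rcases LRel_of_H hγ hltH hw2 with hT' | ⟨G3, hG3, hsi, r3, hr3, hwr⟩ |
          ⟨G3, hG3, hwi', hsT, m2, hm2, hwm2, hm2s⟩ | ⟨G3, hG3, hwi', hsi, hws⟩ |
          ⟨G3, hG3, G4, hG4, hwi', hsi, m2, hm2, hwm2, r4, hr4, hm2r⟩
      · exact absurd (T.lt_mem_left hT') (implant_not_T hγ hG hwi)
      · exact absurd (T.le_mem_left'' hwr) (implant_not_T hγ hG hwi)
      · obtain rfl : G = G3 := (implant_disj'' hγ hG3 hG hwi' hwi).symm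
        rcases T_node_pos hγ hG hsT hsG with hsr | hsm
        · exact root_not_gt hsr hxG hxs
        · rcases hm2s with h' | ⟨heq, _⟩
          · exact max_not_T_lt_max hγ hG hm2 hsm h'
          · subst heq
            exact hns ⟨w, hxw, hwm2⟩
      · obtain rfl : G = G3 := (implant_disj'' hγ hG3 hG hwi' hwi).symm
        exact hns ⟨w, hxw, hws⟩
      · obtain rfl : G = G3 := (implant_disj'' hγ hG3 hG hwi' hwi).symm
        obtain rfl : G = G4 := implant_graft_eq hγ hG4 hG hsi hsG
        exact T.not_lt_of_le'' hm2r (root_T_lt_max hγ hG hr4 hm2)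
    · -- C5 : w ∈ implant G2, G.lt x m, T.le m r2
      obtain rfl : G = G1 := (implant_disj'' hγ hG1 hG hxi hx).symm
      rcases LRel_of_H hγ hltH hw2 with hT' | ⟨G3, hG3, hsi, r3, hr3, hwr⟩ |
          ⟨G3, hG3, hwi', hsT, m2, hm2, hwm2, hm2s⟩ | ⟨G3, hG3, hwi', hsi, hws⟩ |
          ⟨G3, hG3, G4, hG4, hwi', hsi, m2, hm2, hwm2, r4, hr4, hm2r⟩
      · exact absurd (T.lt_mem_left hT') (implant_not_T hγ hG2 hwi)
      · exact absurd (T.le_mem_left'' hwr) (implant_not_T hγ hG2 hwi)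
      · obtain rfl : G2 = G3 := (implant_disj'' hγ hG3 hG2 hwi' hwi).symm
        rcases T_node_pos hγ hG hsT hsG with hsr | hsm
        · exact root_not_gt hsr hxG hxs
        · exact max_not_T_lt_max hγ hG hm hsm (T.lt_of_le_of_lt'' hmr
            (T.lt_of_lt_of_le'' (root_T_lt_max hγ hG2 hr2 hm2) hm2s))
      · obtain rfl : G2 = G3 := (implant_disj'' hγ hG3 hG2 hwi' hwi).symm
        obtain rfl : G = G2 := implant_graft_eq hγ hG2 hG hsi hsG
        exact T.not_lt_of_le'' hmr (root_T_lt_max hγ hG hr2 hm)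
      · obtain rfl : G2 = G3 := (implant_disj'' hγ hG3 hG2 hwi' hwi).symm
        obtain rfl : G = G4 := implant_graft_eq hγ hG4 hG hsi hsG
        exact T.lt_asymm'' (root_T_lt_max hγ hG hr4 hm) (T.lt_of_le_of_lt'' hmr
          (T.lt_of_lt_of_le'' (root_T_lt_max hγ hG2 hr2 hm2) hm2r))


lemma sons_root {G : STree α} (hG : G ∈ γ) {x : α} (hx : x ∈ G.roots) :
    H.sons x = G.sons x := by
  have hxG : x ∈ G.nodes := hx.1
  have hxsupp := root_mem_supp hγ hG hx
  have hxT := supp_mem_nodes hxsupp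
  ext s
  simp only [sons, Set.mem_setOf_eq]
  constructor
  · rintro ⟨h1, h2⟩
    have hsN := H_mem_right hltH h1
    have gson : G.lt x s → G.IsSon x s := by
      intro hxs
      refine ⟨hxs, ?_⟩
      rintro ⟨w, hw1, hw2⟩
      rcases graft_trichotomy (G.lt_mem_right hw1) with hwr | hwm | hwi
      · exact G.lt_irrefl x ((root_unique'' hwr hx) ▸ hw1)
      · exact hwm.2 s hw2
      · exact h2 ⟨w, Hlt_of_G hγ hltH hG hw1, Hlt_of_G hγ hltH hG hw2⟩
    rcases LRel_of_H hγ hltH h1 with hT | ⟨G1, hG1, hsi, r1, hr1, hxr⟩ |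
        ⟨G1, hG1, hxi, _, _, _, _, _⟩ | ⟨G1, hG1, hxi, _, _⟩ |
        ⟨G1, hG1, G2, hG2, hxi, _, _, _, _, _, _, _⟩
    · have hss : s ∈ supp T γ := mem_supp_of_T hγ hsN (T.lt_mem_right hT)
      obtain ⟨m, hm, hms⟩ := supp_escape hG hx hss hT
      rcases hms with hms | ⟨heq, _⟩
      · have hmne : m ≠ x := fun he => by subst he; exact T.lt_irrefl _ (root_T_lt_max hγ hG hx hm)
        exact absurd ⟨m, Hlt_of_G hγ hltH hG (root_lt'' hx hm.1 hmne),
          Hlt_of_T hltH (supp_mem_hybrid (max_mem_supp hγ hG hm)) hsN hms⟩ h2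
      · subst heq
        exact gson (root_lt'' hx hm.1 (fun he => T.lt_irrefl x (he ▸ hT)))
    · rcases hxr with hxr | ⟨heq, _⟩
      · have hs_node : s ∈ G1.nodes := (mem_implant''.1 hsi).1
        have hs_ne : s ≠ r1 := fun he => (mem_implant''.1 hsi).2.1 (he ▸ hr1)
        exact absurd ⟨r1, Hlt_of_T hltH (supp_mem_hybrid hxsupp)
          (supp_mem_hybrid (root_mem_supp hγ hG1 hr1)) hxr,
          Hlt_of_G hγ hltH hG1 (root_lt'' hr1 hs_node hs_ne)⟩ h2
      · subst heq
        obtain rfl : G = G1 := by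
          by_contra hne
          exact roots_ne hγ hG hG1 hne hx hr1 rfl
        exact gson (root_lt'' hx (mem_implant''.1 hsi).1
          (fun he => (mem_implant''.1 hsi).2.1 (he ▸ hx)))
    · exact absurd hxT (implant_not_T hγ hG1 hxi)
    · exact absurd hxT (implant_not_T hγ hG1 hxi)
    · exact absurd hxT (implant_not_T hγ hG1 hxi)
  · rintro ⟨hxs, hns⟩
    have hsG := G.lt_mem_right hxs
    refine ⟨Hlt_of_G hγ hltH hG hxs, ?_⟩
    rintro ⟨w, hw1, hw2⟩
    rcases LRel_of_H hγ hltH hw1 with hT | ⟨G1, hG1, hwi, r1, hr1, hxr⟩ |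
        ⟨G1, hG1, hxi, _, _, _, _, _⟩ | ⟨G1, hG1, hxi, _, _⟩ |
        ⟨G1, hG1, G2, hG2, hxi, _, _, _, _, _, _, _⟩
    · have hwsupp : w ∈ supp T γ := mem_supp_of_T hγ (H_mem_right hltH hw1)
        (T.lt_mem_right hT)
      rcases LRel_of_H hγ hltH hw2 with hT' | ⟨G3, hG3, hsi, r3, hr3, hwr⟩ |
          ⟨G3, hG3, hwi', _, _, _, _, _⟩ | ⟨G3, hG3, hwi', _, _⟩ |
          ⟨G3, hG3, G4, hG4, hwi', _, _, _, _, _, _, _⟩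
      · rcases T_node_pos hγ hG (T.lt_mem_right hT') hsG with hsr | hsm
        · exact G.lt_irrefl x ((root_unique'' hsr hx) ▸ hxs)
        · obtain ⟨m', hm', hle'⟩ := supp_escape hG hx hwsupp hT
          exact max_not_T_lt_max hγ hG hm' hsm (T.lt_of_le_of_lt'' hle' hT')
      · obtain rfl : G = G3 := implant_graft_eq hγ hG3 hG hsi hsG
        have h3 : r3 = x := root_unique'' hr3 hx
        subst h3
        exact T.not_lt_of_le'' hwr hT
      · exact absurd (T.lt_mem_right hT) (implant_not_T hγ hG3 hwi')
      · exact absurd (T.lt_mem_right hT) (implant_not_T hγ hG3 hwi')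
      · exact absurd (T.lt_mem_right hT) (implant_not_T hγ hG3 hwi')
    · rcases LRel_of_H hγ hltH hw2 with hT' | ⟨G3, hG3, hsi, r3, hr3, hwr⟩ |
          ⟨G3, hG3, hwi', hsT, m2, hm2, hwm2, hm2s⟩ | ⟨G3, hG3, hwi', hsi, hws⟩ |
          ⟨G3, hG3, G4, hG4, hwi', hsi, m2, hm2, hwm2, r4, hr4, hm2r⟩
      · exact absurd (T.lt_mem_left hT') (implant_not_T hγ hG1 hwi)
      · exact absurd (T.le_mem_left'' hwr) (implant_not_T hγ hG1 hwi)
      · obtain rfl : G1 = G3 := (implant_disj'' hγ hG3 hG1 hwi' hwi).symm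
        rcases T_node_pos hγ hG hsT hsG with hsr | hsm
        · exact G.lt_irrefl x ((root_unique'' hsr hx) ▸ hxs)
        · rcases hxr with hxr | ⟨heq, _⟩
          · obtain ⟨m', hm', hle'⟩ := supp_escape hG hx (root_mem_supp hγ hG1 hr1) hxr
            exact max_not_T_lt_max hγ hG hm' hsm (T.lt_of_le_of_lt'' hle'
              (T.lt_of_lt_of_le'' (root_T_lt_max hγ hG1 hr1 hm2) hm2s))
          · subst heq
            obtain rfl : G = G1 := by
              by_contra hne
              exact roots_ne hγ hG hG1 hne hx hr1 rfl
            rcases hm2s with h' | ⟨heq2, _⟩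
            · exact max_not_T_lt_max hγ hG hm2 hsm h'
            · subst heq2
              exact hns ⟨w, root_lt'' hx (mem_implant''.1 hwi).1
                (fun he => (mem_implant''.1 hwi).2.1 (he ▸ hx)), hwm2⟩
      · obtain rfl : G1 = G3 := (implant_disj'' hγ hG3 hG1 hwi' hwi).symm
        obtain rfl : G = G1 := implant_graft_eq hγ hG1 hG hsi hsG
        exact hns ⟨w, root_lt'' hx (mem_implant''.1 hwi).1
          (fun he => (mem_implant''.1 hwi).2.1 (he ▸ hx)), hws⟩
      · obtain rfl : G1 = G3 := (implant_disj'' hγ hG3 hG1 hwi' hwi).symm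
        obtain rfl : G = G4 := implant_graft_eq hγ hG4 hG hsi hsG
        have h4 : r4 = x := root_unique'' hr4 hx
        subst h4
        exact T.not_lt_of_le'' hxr (T.lt_of_lt_of_le'' (root_T_lt_max hγ hG1 hr1 hm2) hm2r)
    · exact absurd hxT (implant_not_T hγ hG1 hxi)
    · exact absurd hxT (implant_not_T hγ hG1 hxi)
    · exact absurd hxT (implant_not_T hγ hG1 hxi)

lemma sons_nonroot {x : α} (hx : x ∈ supp T γ) (hnr : ∀ G ∈ γ, x ∉ G.roots) :
    H.sons x = T.sons x := by
  have hxT := supp_mem_nodes hx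
  ext s
  simp only [sons, Set.mem_setOf_eq]
  constructor
  · rintro ⟨h1, h2⟩
    have hsN := H_mem_right hltH h1
    rcases LRel_of_H hγ hltH h1 with hT | ⟨G1, hG1, hsi, r1, hr1, hxr⟩ |
        ⟨G1, hG1, hxi, _, _, _, _, _⟩ | ⟨G1, hG1, hxi, _, _⟩ |
        ⟨G1, hG1, G2, hG2, hxi, _, _, _, _, _, _, _⟩
    · have hss : s ∈ supp T γ := mem_supp_of_T hγ hsN (T.lt_mem_right hT)
      refine ⟨hT, ?_⟩
      rintro ⟨v, hv1, hv2⟩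
      by_cases hvs : v ∈ supp T γ
      · exact h2 ⟨v, Hlt_of_T hltH (supp_mem_hybrid hx) (supp_mem_hybrid hvs) hv1,
          Hlt_of_T hltH (supp_mem_hybrid hvs) (supp_mem_hybrid hss) hv2⟩
      · have hvT := T.lt_mem_right hv1
        have hex : ∃ G ∈ γ, v ∈ explant T G := by
          by_contra hc
          push_neg at hc
          exact hvs (mem_supp''.2 ⟨hvT, hc⟩)
        obtain ⟨G, hG, hve⟩ := hex
        rw [mem_explant''] at hve
        obtain ⟨⟨rg, hrg, hrv⟩, hnab⟩ := hve
        rcases T.pred_linear hv1 hrv with h' | h' | h'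
        · exact h2 ⟨rg, Hlt_of_T hltH (supp_mem_hybrid hx)
            (supp_mem_hybrid (root_mem_supp hγ hG hrg)) h',
            Hlt_of_T hltH (supp_mem_hybrid (root_mem_supp hγ hG hrg))
            (supp_mem_hybrid hss) (T.lt_trans hrv hv2)⟩
        · exact hnr G hG (h'.symm ▸ hrg)
        · obtain ⟨m, hm, hle⟩ := supp_escape hG hrg hx h'
          exact hnab m hm (T.le_trans'' hle (T.le_of_lt'' hv1))
    · have hxne : x ≠ r1 := fun he => hnr G1 hG1 (he ▸ hr1)
      have hxr1 : T.lt x r1 := by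
        rcases hxr with h | ⟨h, _⟩
        · exact h
        · exact absurd h hxne
      exact absurd ⟨r1, Hlt_of_T hltH (supp_mem_hybrid hx)
        (supp_mem_hybrid (root_mem_supp hγ hG1 hr1)) hxr1,
        Hlt_of_G hγ hltH hG1 (root_lt'' hr1 (mem_implant''.1 hsi).1
          (fun he => (mem_implant''.1 hsi).2.1 (he ▸ hr1)))⟩ h2
    · exact absurd hxT (implant_not_T hγ hG1 hxi)
    · exact absurd hxT (implant_not_T hγ hG1 hxi)
    · exact absurd hxT (implant_not_T hγ hG1 hxi)
  · rintro ⟨hxs, hns⟩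
    have hsT := T.lt_mem_right hxs
    have hss : s ∈ supp T γ := by
      rw [mem_supp'']
      refine ⟨hsT, fun G hG hc => ?_⟩
      rw [mem_explant''] at hc
      obtain ⟨⟨rg, hrg, hrs⟩, hnab⟩ := hc
      rcases T.pred_linear hxs hrs with h' | h' | h'
      · exact hns ⟨rg, h', hrs⟩
      · exact hnr G hG (h'.symm ▸ hrg)
      · obtain ⟨m, hm, hle⟩ := supp_escape hG hrg hx h'
        exact hnab m hm (T.le_trans'' hle (T.le_of_lt'' hxs))
    refine ⟨Hlt_of_T hltH (supp_mem_hybrid hx) (supp_mem_hybrid hss) hxs, ?_⟩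
    rintro ⟨w, hw1, hw2⟩
    rcases LRel_of_H hγ hltH hw1 with hT | ⟨G1, hG1, hwi, r1, hr1, hxr⟩ |
        ⟨G1, hG1, hxi, _, _, _, _, _⟩ | ⟨G1, hG1, hxi, _, _⟩ |
        ⟨G1, hG1, G2, hG2, hxi, _, _, _, _, _, _, _⟩
    · rcases LRel_of_H hγ hltH hw2 with hT' | ⟨G3, hG3, hsi, _, _, _⟩ |
          ⟨G3, hG3, hwi', _, _, _, _, _⟩ | ⟨G3, hG3, hwi', _, _⟩ |
          ⟨G3, hG3, G4, hG4, hwi', _, _, _, _, _, _, _⟩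
      · exact hns ⟨w, hT, hT'⟩
      · exact absurd hsi (supp_not_implant hγ hG3 hss)
      · exact absurd (T.lt_mem_right hT) (implant_not_T hγ hG3 hwi')
      · exact absurd (T.lt_mem_right hT) (implant_not_T hγ hG3 hwi')
      · exact absurd (T.lt_mem_right hT) (implant_not_T hγ hG3 hwi')
    · have hxne : x ≠ r1 := fun he => hnr G1 hG1 (he ▸ hr1)
      have hxr1 : T.lt x r1 := by
        rcases hxr with h | ⟨h, _⟩
        · exact h
        · exact absurd h hxne
      rcases LRel_of_H hγ hltH hw2 with hT' | ⟨G3, hG3, hsi, _, _, _⟩ |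
          ⟨G3, hG3, hwi', hsT2, m2, hm2, hwm2, hm2s⟩ | ⟨G3, hG3, hwi', hsi, _⟩ |
          ⟨G3, hG3, G4, hG4, hwi', hsi, _, _, _, _, _, _⟩
      · exact absurd (T.lt_mem_left hT') (implant_not_T hγ hG1 hwi)
      · exact absurd hsi (supp_not_implant hγ hG3 hss)
      · obtain rfl : G1 = G3 := (implant_disj'' hγ hG3 hG1 hwi' hwi).symm
        exact hns ⟨r1, hxr1, T.lt_of_lt_of_le'' (root_T_lt_max hγ hG1 hr1 hm2) hm2s⟩
      · exact absurd hsi (supp_not_implant hγ hG3 hss)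
      · exact absurd hsi (supp_not_implant hγ hG4 hss)
    · exact absurd hxT (implant_not_T hγ hG1 hxi)
    · exact absurd hxT (implant_not_T hγ hG1 hxi)
    · exact absurd hxT (implant_not_T hγ hG1 hxi)


variable (hn : H.nodes = hybridNodes T γ)
include hn

lemma part_root {r : α} (hr : T.IsRoot r) : H.IsRoot r ∧ r ∈ supp T γ := by
  have hrs : r ∈ supp T γ := by
    rw [mem_supp'']
    refine ⟨hr.1, fun G hG hc => ?_⟩
    rw [mem_explant''] at hc
    obtain ⟨⟨r', hr', hlt'⟩, _⟩ := hc
    exact T.not_lt_of_le'' (hr.2 r' (roots_sub_T hγ hG hr')) hlt'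
  refine ⟨⟨hn ▸ supp_mem_hybrid hrs, ?_⟩, hrs⟩
  intro x hx
  rw [hn] at hx
  rcases hx with hxs | hxi
  · rcases hr.2 x (supp_mem_nodes hxs) with h | ⟨h, _⟩
    · exact Or.inl (Hlt_of_T hltH (supp_mem_hybrid hrs) (supp_mem_hybrid hxs) h)
    · exact Or.inr ⟨h, hn ▸ supp_mem_hybrid hrs⟩
  · obtain ⟨G, hG, hxi⟩ := Set.mem_iUnion₂.1 hxi
    obtain ⟨rg, hrg⟩ := exists_root'' hγ hG
    have h1 : H.lt rg x := Hlt_of_G hγ hltH hG (root_lt'' hrg (mem_implant''.1 hxi).1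
      (fun he => (mem_implant''.1 hxi).2.1 (he ▸ hrg)))
    rcases hr.2 rg (roots_sub_T hγ hG hrg) with h | ⟨h, _⟩
    · exact Or.inl (H.lt_trans (Hlt_of_T hltH (supp_mem_hybrid hrs)
        (supp_mem_hybrid (root_mem_supp hγ hG hrg)) h) h1)
    · subst h
      exact Or.inl h1

lemma part_nomax (hT : T.NoMax) : H.NoMax := by
  intro m hm
  rw [hn] at hm
  rcases hm with hms | hmi
  · obtain ⟨v, hv⟩ := hT m (supp_mem_nodes hms)
    by_cases hvs : v ∈ supp T γ
    · exact ⟨v, Hlt_of_T hltH (supp_mem_hybrid hms) (supp_mem_hybrid hvs) hv⟩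
    · have hvT : v ∈ T.nodes := T.lt_mem_right hv
      have hex : ∃ G ∈ γ, v ∈ explant T G := by
        by_contra hc
        push_neg at hc
        exact hvs (mem_supp''.2 ⟨hvT, hc⟩)
      obtain ⟨G, hG, hve⟩ := hex
      rw [mem_explant''] at hve
      obtain ⟨⟨rg, hrg, hrv⟩, hnab⟩ := hve
      rcases T.pred_linear hv hrv with h | h | h
      · exact ⟨rg, Hlt_of_T hltH (supp_mem_hybrid hms)
          (supp_mem_hybrid (root_mem_supp hγ hG hrg)) h⟩
      · obtain ⟨a, ha, b, hb, hab⟩ := (hγ.1 G hG).1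
        subst h
        by_cases hae : a = m
        · have hbne : b ≠ m := fun he => hab (hae.trans he.symm)
          exact ⟨b, Hlt_of_G hγ hltH hG (root_lt'' hrg hb hbne)⟩
        · exact ⟨a, Hlt_of_G hγ hltH hG (root_lt'' hrg ha hae)⟩
      · obtain ⟨mx, hmx, hle⟩ := supp_escape hG hrg hms h
        exact absurd (T.le_trans'' hle (T.le_of_lt'' hv)) (hnab mx hmx)
  · obtain ⟨G, hG, hmi⟩ := Set.mem_iUnion₂.1 hmi
    obtain ⟨v, hv⟩ := exists_gt_of_not_max (mem_implant''.1 hmi).1 (mem_implant''.1 hmi).2.2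
    exact ⟨v, Hlt_of_G hγ hltH hG hv⟩

lemma part_branching (κ : Cardinal.{u}) (hT : Branching T κ)
    (hGs : ∀ G ∈ γ, Branching G κ) : Branching H κ := by
  intro x hx hnmax
  rw [hn] at hx
  rcases hx with hxs | hxi
  · by_cases hroot : ∃ G ∈ γ, x ∈ G.roots
    · obtain ⟨G, hG, hxr⟩ := hroot
      rw [sons_root hγ hltH hG hxr]
      refine hGs G hG x hxr.1 ?_
      intro hmax
      obtain ⟨a, ha, b, hb, hab⟩ := (hγ.1 G hG).1
      by_cases hae : a = x
      · have hbne : b ≠ x := fun he => hab (hae.trans he.symm)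
        exact hmax.2 b (root_lt'' hxr hb hbne)
      · exact hmax.2 a (root_lt'' hxr ha hae)
    · push_neg at hroot
      rw [sons_nonroot hγ hltH hxs hroot]
      refine hT x (supp_mem_nodes hxs) ?_
      intro hmax
      apply hnmax
      refine ⟨hn ▸ supp_mem_hybrid hxs, fun v hv => ?_⟩
      rcases LRel_of_H hγ hltH hv with hT' | ⟨G1, hG1, hvi, r1, hr1, hxr⟩ |
          ⟨G1, hG1, hxi, _, _, _, _, _⟩ | ⟨G1, hG1, hxi, _, _⟩ |
          ⟨G1, hG1, G2, hG2, hxi, _, _, _, _, _, _, _⟩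
      · exact hmax.2 v hT'
      · have hxne : x ≠ r1 := fun he => hroot G1 hG1 (he ▸ hr1)
        rcases hxr with h | ⟨h, _⟩
        · exact hmax.2 r1 h
        · exact hxne h
      · exact implant_not_T hγ hG1 hxi (supp_mem_nodes hxs)
      · exact implant_not_T hγ hG1 hxi (supp_mem_nodes hxs)
      · exact implant_not_T hγ hG1 hxi (supp_mem_nodes hxs)
  · obtain ⟨G, hG, hxi⟩ := Set.mem_iUnion₂.1 hxi
    rw [sons_implant hγ hltH hG hxi]
    refine hGs G hG x (mem_implant''.1 hxi).1 ?_
    intro hmax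
    obtain ⟨v, hv⟩ := exists_gt_of_not_max (mem_implant''.1 hxi).1 (mem_implant''.1 hxi).2.2
    exact hmax.2 v hv

lemma part_height (hT : T.HeightLeOmega) (hGs : ∀ G ∈ γ, HeightLeOmega G) :
    H.HeightLeOmega := by
  have hV : ∀ m : α, (⋃ G ∈ {G | G ∈ γ ∧ m ∈ G.maxNodes}, G.pred m).Finite := by
    intro m
    refine Set.Finite.biUnion ?_ ?_
    · exact Set.Subsingleton.finite
        (fun G hGm G' hGm' => max_graft_unique hγ hGm.1 hGm'.1 hGm.2 hGm'.2)
    · exact fun G hGm => hGs G hGm.1 m hGm.2.1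
  have hWfin : ∀ t ∈ T.nodes,
      ((T.pred t) ∪ ⋃ m ∈ insert t (T.pred t),
        ⋃ G ∈ {G | G ∈ γ ∧ m ∈ G.maxNodes}, G.pred m).Finite := by
    intro t ht
    exact Set.Finite.union (hT t ht)
      (Set.Finite.biUnion ((hT t ht).insert t) (fun m _ => hV m))
  have memW : ∀ t v, ∀ G ∈ γ, (∃ m ∈ G.maxNodes, G.lt v m ∧ T.le m t) →
      v ∈ ⋃ m ∈ insert t (T.pred t), ⋃ G ∈ {G | G ∈ γ ∧ m ∈ G.maxNodes}, G.pred m := by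
    rintro t v G hG ⟨m, hm, hvm, hmt⟩
    have hmK : m ∈ insert t (T.pred t) := by
      rcases hmt with h | ⟨h, _⟩
      · exact Set.mem_insert_of_mem _ h
      · exact h ▸ Set.mem_insert _ _
    exact Set.mem_biUnion hmK (Set.mem_biUnion (show G ∈ {G | G ∈ γ ∧ m ∈ G.maxNodes}
      from ⟨hG, hm⟩) hvm)
  intro x hxH
  rw [hn] at hxH
  rcases hxH with hxs | hxi
  · refine Set.Finite.subset (hWfin x (supp_mem_nodes hxs)) ?_
    intro v hv
    have hv' : H.lt v x := hv
    rcases LRel_of_H hγ hltH hv' with hT' | ⟨G1, hG1, hxi, _, _, _⟩ |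
        ⟨G1, hG1, hvi, _, m, hm, hvm, hmx⟩ | ⟨G1, hG1, hvi, hxi, _⟩ |
        ⟨G1, hG1, G2, hG2, hvi, hxi, _, _, _, _, _, _⟩
    · exact Or.inl hT'
    · exact absurd hxi (supp_not_implant hγ hG1 hxs)
    · exact Or.inr (memW x v G1 hG1 ⟨m, hm, hvm, hmx⟩)
    · exact absurd hxi (supp_not_implant hγ hG1 hxs)
    · exact absurd hxi (supp_not_implant hγ hG2 hxs)
  · obtain ⟨G, hG, hxi⟩ := Set.mem_iUnion₂.1 hxi
    obtain ⟨rg, hrg⟩ := exists_root'' hγ hG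
    have hrgT : rg ∈ T.nodes := roots_sub_T hγ hG hrg
    refine Set.Finite.subset (Set.Finite.insert rg (Set.Finite.union (hWfin rg hrgT)
      (hGs G hG x (mem_implant''.1 hxi).1))) ?_
    intro v hv
    have hv' : H.lt v x := hv
    rcases LRel_of_H hγ hltH hv' with hT' | ⟨G1, hG1, hxi1, r1, hr1, hvr1⟩ |
        ⟨G1, hG1, hvi, hxT, _, _, _, _⟩ | ⟨G1, hG1, hvi, hxi1, hvx⟩ |
        ⟨G1, hG1, G2, hG2, hvi, hxi1, m, hm, hvm, r2, hr2, hmr⟩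
    · exact absurd (T.lt_mem_right hT') (implant_not_T hγ hG hxi)
    · obtain rfl : G = G1 := (implant_disj'' hγ hG1 hG hxi1 hxi).symm
      have hr1g : r1 = rg := root_unique'' hr1 hrg
      subst hr1g
      rcases hvr1 with h | ⟨h, _⟩
      · exact Set.mem_insert_of_mem _ (Or.inl (Or.inl h))
      · exact h ▸ Set.mem_insert _ _
    · exact absurd hxT (implant_not_T hγ hG hxi)
    · obtain rfl : G = G1 := (implant_disj'' hγ hG1 hG hxi1 hxi).symm
      exact Set.mem_insert_of_mem _ (Or.inr hvx)
    · obtain rfl : G = G2 := (implant_disj'' hγ hG2 hG hxi1 hxi).symm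
      have hr2g : r2 = rg := root_unique'' hr2 hrg
      subst hr2g
      exact Set.mem_insert_of_mem _ (Or.inl (Or.inr (memW _ v G1 hG1 ⟨m, hm, hvm, hmr⟩)))

end HybridTree

end STree

end HybridAux
/-- Properties of the hybrid `H = hybr(T,γ)`: if `T` has a least node
then so does `H` (the same one, lying in the support); if `T` has no maximal
nodes neither does `H`; κ-branching and height ≤ ω are preserved. -/
theorem hybrid_properties {α : Type u} (T : STree α) (γ : Set (STree α)) (H : STree α)
    (hγ : STree.ConsistentGrafts T γ)
    (hn : H.nodes = STree.hybridNodes T γ)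
    (hlt : ∀ x y, H.lt x y ↔ STree.hybridLt T γ x y) :
    (∀ r, T.IsRoot r → H.IsRoot r ∧ r ∈ STree.supp T γ) ∧
    (T.NoMax → H.NoMax) ∧
    (∀ κ : Cardinal.{u}, STree.Branching T κ → (∀ G ∈ γ, STree.Branching G κ) →
      STree.Branching H κ) ∧
    (T.HeightLeOmega → (∀ G ∈ γ, STree.HeightLeOmega G) → H.HeightLeOmega) :=
  ⟨fun _ hr => STree.part_root hγ hlt hn hr, STree.part_nomax hγ hlt hn,
    fun κ hT hGs => STree.part_branching hγ hlt hn κ hT hGs,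
    fun hT hGs => STree.part_height hγ hlt hn hT hGs⟩
end
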